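/- arXiv:2312.02303 — 8 statements merged into one kernel-verified Lean document; each statement's English description precedes it below -/
import Mathlib

section
/- Let R : Ω → L(X) be a pseudo-resolvent satisfying (G_{k₀}): there exist M > 0 and a real sequence (λₙ) in Ω with λₙ → ∞ and ‖λₙ^{2-k₀} R(λₙ)‖ ≤ M. Then ker R(μ)^{k₀+1} = ker R(μ)^{k₀} for all μ ∈ Ω. -/
open Filter Finset Topology

lemma pseudoResolvent_key {X : Type*} [NormedAddCommGroup X] [NormedSpace ℂ X]
    (Ω : Set ℂ) (R : ℂ → (X →L[ℂ] X))
    (hR : ∀ l ∈ Ω, ∀ m ∈ Ω, R l - R m = (m - l) • (R l ∘L R m))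
    {μ l : ℂ} (hμ : μ ∈ Ω) (hl : l ∈ Ω) :
    ∀ (k : ℕ) (x : X),
      (l - μ) ^ k • (R l) (((R μ) ^ k) x)
        = (∑ i ∈ Finset.range k, ((-1 : ℂ) ^ (k + 1 + i) * (l - μ) ^ i) • ((R μ) ^ (i + 1)) x)
          + ((-1 : ℂ) ^ k) • (R l) x := by
  intro k
  induction k with
  | zero => intro x; simp
  | succ k ih =>
    intro x
    have hpow : ∀ (m : ℕ) (y : X), ((R μ) ^ (m + 1)) y = ((R μ) ^ m) ((R μ) y) := by
      intro m y; rw [pow_succ]; rfl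
    have hres : (l - μ) • (R l) ((R μ) x) = (R μ) x - (R l) x := by
      have h := congrArg (fun T : X →L[ℂ] X => T x) (hR l hl μ hμ)
      simp only [ContinuousLinearMap.sub_apply, ContinuousLinearMap.smul_apply,
        ContinuousLinearMap.comp_apply] at h
      rw [show (l - μ) = -(μ - l) by ring, neg_smul, ← h]
      abel
    calc (l - μ) ^ (k + 1) • (R l) (((R μ) ^ (k + 1)) x)
        = (l - μ) • ((l - μ) ^ k • (R l) (((R μ) ^ k) ((R μ) x))) := by
          rw [hpow k x, pow_succ', mul_smul]
      _ = (l - μ) • ((∑ i ∈ Finset.range k,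
              ((-1 : ℂ) ^ (k + 1 + i) * (l - μ) ^ i) • ((R μ) ^ (i + 1)) ((R μ) x))
            + ((-1 : ℂ) ^ k) • (R l) ((R μ) x)) := by rw [ih ((R μ) x)]
      _ = (∑ i ∈ Finset.range k,
              ((-1 : ℂ) ^ (k + 1 + 1 + (i + 1)) * (l - μ) ^ (i + 1)) • ((R μ) ^ (i + 1 + 1)) x)
            + ((-1 : ℂ) ^ k • (R μ) x + (-1 : ℂ) ^ (k + 1) • (R l) x) := by
          rw [smul_add, Finset.smul_sum]
          congr 1
          · refine Finset.sum_congr rfl fun i hi => ?_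
            rw [← hpow (i + 1) x, smul_smul]
            congr 1
            rw [show k + 1 + 1 + (i + 1) = (k + 1 + i) + 2 by ring, pow_add]
            ring
          · rw [smul_comm, hres, smul_sub, sub_eq_add_neg]
            congr 1
            rw [pow_succ, mul_smul]
            simp
      _ = _ := by
          rw [Finset.sum_range_succ']
          have h0 : ((-1 : ℂ) ^ (k + 1 + 1 + 0) * (l - μ) ^ 0) • ((R μ) ^ (0 + 1)) x
              = (-1 : ℂ) ^ k • (R μ) x := by
            norm_num [pow_succ]
          rw [h0]
          abel

/-- Under the growth condition `(G_{k₀})`, the kernels of powers of a pseudo-resolvent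
stabilize: `ker R(μ)^{k₀+1} = ker R(μ)^{k₀}`. -/
theorem pseudoResolvent_ker_stabilize
    {X : Type*} [NormedAddCommGroup X] [NormedSpace ℂ X] [CompleteSpace X]
    (Ω : Set ℂ) (hΩ : IsOpen Ω) (R : ℂ → (X →L[ℂ] X))
    (hR : ∀ l ∈ Ω, ∀ m ∈ Ω, R l - R m = (m - l) • (R l ∘L R m))
    (k₀ : ℕ) (hk₀ : 1 ≤ k₀)
    (hG : ∃ M : ℝ, 0 < M ∧ ∃ seq : ℕ → ℝ,
      (∀ n, ((seq n : ℂ)) ∈ Ω) ∧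
      Filter.Tendsto seq Filter.atTop Filter.atTop ∧
      (∀ n, ‖((seq n : ℂ)) ^ ((2 : ℤ) - (k₀ : ℤ)) • R ((seq n : ℂ))‖ ≤ M)) :
    ∀ μ ∈ Ω, LinearMap.ker (((R μ) ^ (k₀ + 1) : X →L[ℂ] X) : X →ₗ[ℂ] X) = LinearMap.ker (((R μ) ^ k₀ : X →L[ℂ] X) : X →ₗ[ℂ] X) := by
  obtain ⟨M, hM, seq, hseqΩ, hseqT, hbound⟩ := hG
  intro μ hμ
  apply le_antisymm
  · intro x hx
    simp only [LinearMap.mem_ker, ContinuousLinearMap.coe_coe] at hx ⊢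
    -- notation
    set sc : ℕ → ℂ := fun n => ((seq n : ℝ) : ℂ) with hsc
    set t : ℕ → ℂ := fun n => ((sc n)⁻¹) ^ (k₀ - 1) with ht
    set v : ℕ → X := fun i => ((R μ) ^ (i + 1)) x with hv
    -- Step A : the identity
    have hA : ∀ n, (∑ i ∈ Finset.range (k₀ + 1),
          ((-1 : ℂ) ^ (k₀ + 1 + 1 + i) * t n * (sc n - μ) ^ i) • v i)
        + ((-1 : ℂ) ^ (k₀ + 1) * t n) • (R (sc n)) x = 0 := by
      intro n
      have key := pseudoResolvent_key Ω R hR hμ (hseqΩ n) (k₀ + 1) x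
      rw [hx, map_zero, smul_zero] at key
      calc (∑ i ∈ Finset.range (k₀ + 1),
              ((-1 : ℂ) ^ (k₀ + 1 + 1 + i) * t n * (sc n - μ) ^ i) • v i)
            + ((-1 : ℂ) ^ (k₀ + 1) * t n) • (R (sc n)) x
          = t n • ((∑ i ∈ Finset.range (k₀ + 1),
              ((-1 : ℂ) ^ (k₀ + 1 + 1 + i) * (sc n - μ) ^ i) • v i)
            + ((-1 : ℂ) ^ (k₀ + 1)) • (R (sc n)) x) := by
              rw [smul_add, Finset.smul_sum]
              congr 1
              · exact Finset.sum_congr rfl fun i hi => by rw [smul_smul]; ring_nf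
              · rw [smul_smul]; ring_nf
        _ = t n • (0 : X) := by rw [key]
        _ = 0 := smul_zero _
    -- eventually the sequence is ≥ 1
    have hev : ∀ᶠ n in atTop, (1 : ℝ) ≤ seq n := hseqT.eventually_ge_atTop 1
    have hne : ∀ᶠ n in atTop, sc n ≠ 0 := by
      filter_upwards [hev] with n hn
      simp only [hsc, ne_eq, Complex.ofReal_eq_zero]
      linarith
    have hinv : Tendsto (fun n => (sc n)⁻¹) atTop (𝓝 0) := by
      have h1 : Tendsto (fun n => (seq n)⁻¹) atTop (𝓝 (0 : ℝ)) :=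
        tendsto_inv_atTop_zero.comp hseqT
      have h2 := (Complex.continuous_ofReal.tendsto 0).comp h1
      simp only [Function.comp_def, Complex.ofReal_inv, Complex.ofReal_zero] at h2
      simpa [hsc] using h2
    -- limits of the scalar coefficients
    have hterm : ∀ i ∈ Finset.range (k₀ + 1),
        Tendsto (fun n => ((-1 : ℂ) ^ (k₀ + 1 + 1 + i) * t n * (sc n - μ) ^ i) • v i) atTop
          (𝓝 (if i = k₀ - 1 then -(((R μ) ^ k₀) x) else 0)) := by
      intro i hi
      rcases eq_or_lt_of_le (Nat.lt_succ_iff.mp (Finset.mem_range.mp hi)) with hik | hik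
      · -- i = k₀ : the vector v i vanishes
        have hv0 : v i = 0 := by rw [hv]; simp only [hik]; exact hx
        have : (fun n => ((-1 : ℂ) ^ (k₀ + 1 + 1 + i) * t n * (sc n - μ) ^ i) • v i)
            = fun _ => (0 : X) := by funext n; rw [hv0, smul_zero]
        rw [this, if_neg (by omega)]
        exact tendsto_const_nhds
      · -- i < k₀
        have hile : i ≤ k₀ - 1 := by omega
        -- eventual rewriting of the scalar
        have heq : ∀ᶠ n in atTop,
            (-1 : ℂ) ^ (k₀ + 1 + 1 + i) * t n * (sc n - μ) ^ i
              = (-1 : ℂ) ^ (k₀ + 1 + 1 + i) * ((sc n)⁻¹) ^ (k₀ - 1 - i)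
                  * (1 - μ * (sc n)⁻¹) ^ i := by
          filter_upwards [hne] with n hn
          have hfac : sc n - μ = sc n * (1 - μ * (sc n)⁻¹) := by
            field_simp
          rw [hfac, mul_pow, ht]
          have hsplit : ((sc n)⁻¹) ^ (k₀ - 1) * (sc n) ^ i = ((sc n)⁻¹) ^ (k₀ - 1 - i) := by
            rw [pow_sub₀ _ (inv_ne_zero hn) (by omega : i ≤ k₀ - 1)]
            simp only [inv_pow, inv_inv]
          calc (-1 : ℂ) ^ (k₀ + 1 + 1 + i) * ((sc n)⁻¹) ^ (k₀ - 1)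
                * ((sc n) ^ i * (1 - μ * (sc n)⁻¹) ^ i)
              = (-1 : ℂ) ^ (k₀ + 1 + 1 + i) * (((sc n)⁻¹) ^ (k₀ - 1) * (sc n) ^ i)
                * (1 - μ * (sc n)⁻¹) ^ i := by ring
            _ = _ := by rw [hsplit]
        -- limit of the rewritten scalar
        have hlim : Tendsto (fun n => (-1 : ℂ) ^ (k₀ + 1 + 1 + i) * ((sc n)⁻¹) ^ (k₀ - 1 - i)
              * (1 - μ * (sc n)⁻¹) ^ i) atTop
            (𝓝 ((-1 : ℂ) ^ (k₀ + 1 + 1 + i) * (0 : ℂ) ^ (k₀ - 1 - i) * (1 - μ * 0) ^ i)) := by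
          exact ((tendsto_const_nhds.mul (hinv.pow _)).mul
            ((tendsto_const_nhds.sub (tendsto_const_nhds.mul hinv)).pow i))
        have hscal : Tendsto (fun n => (-1 : ℂ) ^ (k₀ + 1 + 1 + i) * t n * (sc n - μ) ^ i) atTop
            (𝓝 ((-1 : ℂ) ^ (k₀ + 1 + 1 + i) * (0 : ℂ) ^ (k₀ - 1 - i) * (1 - μ * 0) ^ i)) :=
          hlim.congr' (heq.mono fun n h => h.symm)
        rcases eq_or_lt_of_le hile with hieq | hilt
        · -- i = k₀ - 1 : limit is -1
          have hL : (-1 : ℂ) ^ (k₀ + 1 + 1 + i) * (0 : ℂ) ^ (k₀ - 1 - i) * (1 - μ * 0) ^ i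
              = -1 := by
            rw [hieq]
            simp only [Nat.sub_self, pow_zero, mul_one, mul_zero, sub_zero, one_pow]
            rw [show k₀ + 1 + 1 + (k₀ - 1) = 2 * k₀ + 1 by omega, pow_succ, pow_mul]
            norm_num
          have hvv : v i = ((R μ) ^ k₀) x := by
            simp only [hv]
            rw [show i + 1 = k₀ by omega]
          rw [if_pos hieq, ← hvv]
          have := hscal.smul_const (v i)
          rw [hL] at this
          simpa using this
        · -- i < k₀ - 1 : limit is 0
          have hL : (-1 : ℂ) ^ (k₀ + 1 + 1 + i) * (0 : ℂ) ^ (k₀ - 1 - i) * (1 - μ * 0) ^ i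
              = 0 := by
            rw [zero_pow (by omega : k₀ - 1 - i ≠ 0)]
            ring
          rw [if_neg (by omega)]
          have := hscal.smul_const (v i)
          rw [hL] at this
          simpa using this
    -- limit of the sum
    have hsum : Tendsto (fun n => ∑ i ∈ Finset.range (k₀ + 1),
          ((-1 : ℂ) ^ (k₀ + 1 + 1 + i) * t n * (sc n - μ) ^ i) • v i) atTop
        (𝓝 (∑ i ∈ Finset.range (k₀ + 1),
          if i = k₀ - 1 then -(((R μ) ^ k₀) x) else 0)) :=
      tendsto_finset_sum _ hterm
    have hsumval : (∑ i ∈ Finset.range (k₀ + 1),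
        if i = k₀ - 1 then -(((R μ) ^ k₀) x) else 0) = -(((R μ) ^ k₀) x) := by
      rw [Finset.sum_ite_eq' (Finset.range (k₀ + 1)) (k₀ - 1) (fun _ => -(((R μ) ^ k₀) x))]
      rw [if_pos (Finset.mem_range.mpr (by omega))]
    rw [hsumval] at hsum
    -- limit of the tail term
    have htail : Tendsto (fun n => ((-1 : ℂ) ^ (k₀ + 1) * t n) • (R (sc n)) x) atTop (𝓝 0) := by
      have hb : Tendsto (fun n => (seq n)⁻¹ * (M * ‖x‖)) atTop (𝓝 0) := by
        have h1 : Tendsto (fun n => (seq n)⁻¹) atTop (𝓝 (0 : ℝ)) :=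
          tendsto_inv_atTop_zero.comp hseqT
        have := h1.mul_const (M * ‖x‖)
        simpa using this
      refine squeeze_zero_norm' ?_ hb
      · filter_upwards [hev] with n hn
        have hn0 : sc n ≠ 0 := by
          simp only [hsc, ne_eq, Complex.ofReal_eq_zero]; linarith
        have hteq : t n = (sc n)⁻¹ * (sc n) ^ ((2 : ℤ) - (k₀ : ℤ)) := by
          rw [ht]
          have : (sc n)⁻¹ * (sc n) ^ ((2 : ℤ) - (k₀ : ℤ))
              = (sc n) ^ ((-1 : ℤ) + ((2 : ℤ) - (k₀ : ℤ))) := by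
            rw [zpow_add₀ hn0, zpow_neg_one]
          rw [this, show (-1 : ℤ) + ((2 : ℤ) - (k₀ : ℤ)) = -((k₀ - 1 : ℕ) : ℤ) by push_cast; omega]
          rw [zpow_neg, zpow_natCast, ← inv_pow]
        have hvec : ((-1 : ℂ) ^ (k₀ + 1) * t n) • (R (sc n)) x
            = ((-1 : ℂ) ^ (k₀ + 1) * (sc n)⁻¹)
                • (((sc n) ^ ((2 : ℤ) - (k₀ : ℤ)) • R (sc n)) x) := by
          rw [hteq, ContinuousLinearMap.smul_apply, smul_smul]
          congr 1
          ring
        rw [hvec, norm_smul]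
        have h1 : ‖(-1 : ℂ) ^ (k₀ + 1) * (sc n)⁻¹‖ = (seq n)⁻¹ := by
          rw [norm_mul, norm_pow, norm_neg, norm_one, one_pow, one_mul, norm_inv]
          simp only [hsc, Complex.norm_real, Real.norm_eq_abs]
          rw [abs_of_nonneg (by linarith)]
        rw [h1]
        have h2 : ‖(((sc n) ^ ((2 : ℤ) - (k₀ : ℤ)) • R (sc n)) x)‖ ≤ M * ‖x‖ := by
          calc ‖(((sc n) ^ ((2 : ℤ) - (k₀ : ℤ)) • R (sc n)) x)‖
              ≤ ‖(sc n) ^ ((2 : ℤ) - (k₀ : ℤ)) • R (sc n)‖ * ‖x‖ :=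
                ContinuousLinearMap.le_opNorm _ _
            _ ≤ M * ‖x‖ := by
                apply mul_le_mul_of_nonneg_right (hbound n) (norm_nonneg x)
        exact mul_le_mul_of_nonneg_left h2 (by positivity)
    -- combine
    have hfull : Tendsto (fun n => (∑ i ∈ Finset.range (k₀ + 1),
          ((-1 : ℂ) ^ (k₀ + 1 + 1 + i) * t n * (sc n - μ) ^ i) • v i)
        + ((-1 : ℂ) ^ (k₀ + 1) * t n) • (R (sc n)) x) atTop
        (𝓝 (-(((R μ) ^ k₀) x) + 0)) := hsum.add htail
    have hconst : Tendsto (fun _ : ℕ => (0 : X)) atTop (𝓝 (-(((R μ) ^ k₀) x) + 0)) := by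
      have : (fun n => (∑ i ∈ Finset.range (k₀ + 1),
          ((-1 : ℂ) ^ (k₀ + 1 + 1 + i) * t n * (sc n - μ) ^ i) • v i)
        + ((-1 : ℂ) ^ (k₀ + 1) * t n) • (R (sc n)) x) = fun _ => (0 : X) := funext hA
      rwa [this] at hfull
    have := tendsto_nhds_unique hconst tendsto_const_nhds
    rw [add_zero] at this
    exact neg_eq_zero.mp this
  · intro x hx
    simp only [LinearMap.mem_ker, ContinuousLinearMap.coe_coe] at hx ⊢
    rw [pow_succ', ContinuousLinearMap.mul_apply, hx, map_zero]
end

section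
/- Let R : Ω → L(X) be a pseudo-resolvent satisfying (G_{k₀}). Then the closure of ran R(μ)^{k₀+1} equals the closure of ran R(μ)^{k₀} for all μ ∈ Ω. (This follows by duality from the kernel stabilization for the dual pseudo-resolvent R'(λ), using that annihilators of kernels of the adjoint equal closures of ranges.) -/
open Filter Topology

section Aux

variable {X : Type*} [NormedAddCommGroup X] [NormedSpace ℂ X]

/-- Pseudo-resolvent operators commute. -/
lemma pseudoResolvent_commute (Ω : Set ℂ) (R : ℂ → (X →L[ℂ] X))
    (hR : ∀ l ∈ Ω, ∀ m ∈ Ω, R l - R m = (m - l) • (R l ∘L R m))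
    {l m : ℂ} (hl : l ∈ Ω) (hm : m ∈ Ω) : Commute (R l) (R m) := by
  by_cases h : l = m
  · subst h; exact Commute.refl _
  · have h1 := hR l hl m hm
    have h2 := hR m hm l hl
    have hsum : (m - l) • (R l ∘L R m) + (l - m) • (R m ∘L R l) = 0 := by
      rw [← h1, ← h2]; abel
    have hml : m - l ≠ 0 := sub_ne_zero.2 (Ne.symm h)
    have : (m - l) • (R l ∘L R m) = (m - l) • (R m ∘L R l) := by
      have : (l - m) = -(m - l) := by ring
      rw [this, neg_smul] at hsum
      linear_combination (norm := abel) hsum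
    have := smul_right_injective (X →L[ℂ] X) hml this
    exact this

/-- Key identity: `(l-m) • (R l * (R m)^(k+1)) = (R m)^(k+1) - R l * (R m)^k`. -/
lemma pseudoResolvent_pow_identity (Ω : Set ℂ) (R : ℂ → (X →L[ℂ] X))
    (hR : ∀ l ∈ Ω, ∀ m ∈ Ω, R l - R m = (m - l) • (R l ∘L R m))
    {l m : ℂ} (hl : l ∈ Ω) (hm : m ∈ Ω) (k : ℕ) :
    (l - m) • (R l * (R m) ^ (k + 1)) = (R m) ^ (k + 1) - R l * (R m) ^ k := by
  have h1 := hR l hl m hm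
  have hbase : (l - m) • (R l * R m) = R m - R l := by
    have : (l - m) = -(m - l) := by ring
    rw [this, neg_smul, ContinuousLinearMap.mul_def, ← h1]; abel
  calc (l - m) • (R l * (R m) ^ (k + 1))
      = ((l - m) • (R l * R m)) * (R m) ^ k := by
        rw [pow_succ' (R m) k, smul_mul_assoc, mul_assoc]
    _ = (R m - R l) * (R m) ^ k := by rw [hbase]
    _ = (R m) ^ (k + 1) - R l * (R m) ^ k := by
        rw [sub_mul, ← pow_succ']

/-- Membership: `c • (R l * (R m)^k) x ∈ range ((R m)^(k+1))`. -/
lemma pseudoResolvent_mem_range (Ω : Set ℂ) (R : ℂ → (X →L[ℂ] X))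
    (hR : ∀ l ∈ Ω, ∀ m ∈ Ω, R l - R m = (m - l) • (R l ∘L R m))
    {l m : ℂ} (hl : l ∈ Ω) (hm : m ∈ Ω) (k : ℕ) (c : ℂ) (x : X) :
    c • (R l * (R m) ^ k) x ∈ LinearMap.range (((R m) ^ (k + 1) : X →L[ℂ] X) : X →ₗ[ℂ] X) := by
  have hcomm : Commute (R l) (R m) := pseudoResolvent_commute Ω R hR hl hm
  have h1 := hR l hl m hm
  have hRl : R l = R m + (m - l) • (R l * R m) := by
    rw [ContinuousLinearMap.mul_def, ← h1]; abel
  have hexp : R l * (R m) ^ k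
      = (R m) ^ (k + 1) + (m - l) • ((R m) ^ (k + 1) * R l) := by
    calc R l * (R m) ^ k
        = (R m + (m - l) • (R l * R m)) * (R m) ^ k := by rw [← hRl]
      _ = (R m) ^ (k + 1) + (m - l) • (R l * ((R m) ^ (k + 1))) := by
          rw [add_mul, smul_mul_assoc, mul_assoc, ← pow_succ']
      _ = (R m) ^ (k + 1) + (m - l) • ((R m) ^ (k + 1) * R l) := by
          rw [(hcomm.pow_right (k + 1)).eq]
  refine ⟨c • (x + (m - l) • R l x), ?_⟩
  have := congrArg (fun T : X →L[ℂ] X => T x) hexp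
  simp only [ContinuousLinearMap.add_apply, ContinuousLinearMap.smul_apply,
    ContinuousLinearMap.mul_apply] at this ⊢
  rw [map_smul, map_add, map_smul]
  rw [this]; rfl

end Aux

/-- Under the growth condition `(G_{k₀})`, the closures of the ranges of powers of a
pseudo-resolvent stabilize: `closure(ran R(μ)^{k₀+1}) = closure(ran R(μ)^{k₀})`. -/
theorem pseudoResolvent_range_closure_stabilize
    {X : Type*} [NormedAddCommGroup X] [NormedSpace ℂ X] [CompleteSpace X]
    (Ω : Set ℂ) (hΩ : IsOpen Ω) (R : ℂ → (X →L[ℂ] X))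
    (hR : ∀ l ∈ Ω, ∀ m ∈ Ω, R l - R m = (m - l) • (R l ∘L R m))
    (k₀ : ℕ) (hk₀ : 1 ≤ k₀)
    (hG : ∃ M : ℝ, 0 < M ∧ ∃ seq : ℕ → ℝ,
      (∀ n, ((seq n : ℂ)) ∈ Ω) ∧
      Filter.Tendsto seq Filter.atTop Filter.atTop ∧
      (∀ n, ‖((seq n : ℂ)) ^ ((2 : ℤ) - (k₀ : ℤ)) • R ((seq n : ℂ))‖ ≤ M)) :
    ∀ μ ∈ Ω,
      (LinearMap.range (((R μ) ^ (k₀ + 1) : X →L[ℂ] X) : X →ₗ[ℂ] X)).topologicalClosure =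
      (LinearMap.range (((R μ) ^ k₀ : X →L[ℂ] X) : X →ₗ[ℂ] X)).topologicalClosure := by
  obtain ⟨M, hM, seq, hseqΩ, hseq, hbound⟩ := hG
  intro μ hμ
  -- eventual facts about the sequence
  have hev1 : ∀ᶠ n in atTop, 1 ≤ seq n := hseq.eventually_ge_atTop 1
  have hevμ : ∀ᶠ n in atTop, ‖μ‖ + 1 ≤ seq n := hseq.eventually_ge_atTop _
  have hne : ∀ᶠ n in atTop, (seq n : ℂ) ≠ 0 ∧ (seq n : ℂ) ≠ μ := by
    filter_upwards [hev1, hevμ] with n h1 h2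
    constructor
    · intro h
      have : seq n = 0 := by exact_mod_cast h
      linarith
    · intro h
      have : ‖μ‖ = seq n := by rw [← h]; simp [abs_of_nonneg (by linarith : (0:ℝ) ≤ seq n)]
      linarith
  -- norm of λₙ - μ tends to infinity
  have hsub_norm : Tendsto (fun n => ‖(seq n : ℂ) - μ‖) atTop atTop := by
    refine tendsto_atTop_mono (fun n => ?_) (tendsto_atTop_add_const_right _ (-‖μ‖) hseq)
    have := norm_sub_norm_le ((seq n : ℂ)) μ
    have h2 : ‖(seq n : ℂ)‖ = |seq n| := by simp
    calc seq n + -‖μ‖ ≤ |seq n| - ‖μ‖ := by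
          have := le_abs_self (seq n); linarith
      _ ≤ ‖(seq n : ℂ) - μ‖ := by rw [← h2]; exact this
  have hinv : Tendsto (fun n => ((seq n : ℂ) - μ)⁻¹) atTop (𝓝 0) := by
    rw [tendsto_zero_iff_norm_tendsto_zero]
    simpa [norm_inv, Pi.inv_def] using hsub_norm.inv_tendsto_atTop
  -- the key induction
  have key : ∀ j : ℕ, j + 1 ≤ k₀ →
      Tendsto (fun n => ((seq n : ℂ)) ^ ((j : ℤ) + 1 - (k₀ : ℤ)) • (R (seq n) * (R μ) ^ j))
        atTop (𝓝 0) := by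
    intro j
    induction j with
    | zero =>
      intro _
      have hbdd : Filter.IsBoundedUnder (· ≤ ·) atTop
          (fun n => ‖(seq n : ℂ) ^ ((2:ℤ) - (k₀:ℤ)) • R (seq n)‖) :=
        ⟨M, Filter.eventually_map.2 (Filter.Eventually.of_forall hbound)⟩
      have hscal : Tendsto (fun n => ((seq n : ℂ))⁻¹) atTop (𝓝 0) := by
        rw [tendsto_zero_iff_norm_tendsto_zero]
        have h1 : Tendsto (fun n => ‖(seq n : ℂ)‖) atTop atTop := by
          refine tendsto_atTop_mono (fun n => ?_) hseq
          simp [le_abs_self]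
        simpa [norm_inv, Pi.inv_def] using h1.inv_tendsto_atTop
      have hT := hscal.zero_smul_isBoundedUnder_le hbdd
      refine hT.congr' ?_
      filter_upwards [hne] with n ⟨hn0, _⟩
      have hzz : (seq n : ℂ)⁻¹ * (seq n : ℂ) ^ ((2 : ℤ) - (k₀ : ℤ))
          = ((seq n : ℂ)) ^ (((0 : ℕ) : ℤ) + 1 - (k₀ : ℤ)) := by
        rw [← zpow_neg_one, ← zpow_add₀ hn0]
        congr 1
        push_cast
        ring
      show (seq n : ℂ)⁻¹ • ((seq n : ℂ) ^ ((2:ℤ) - (k₀:ℤ)) • R (seq n))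
          = ((seq n : ℂ)) ^ (((0:ℕ) : ℤ) + 1 - (k₀ : ℤ)) • (R (seq n) * (R μ) ^ 0)
      rw [smul_smul, hzz, pow_zero, mul_one]
    | succ j ih =>
      intro hj1
      have hj : j + 1 ≤ k₀ := by omega
      have ihj := ih hj
      -- f₁ n • (R μ)^(j+1)  - f₂ n • (previous)  with f₁ → 0, f₂ → 1
      have hf1 : Tendsto
          (fun n => ((seq n : ℂ)) ^ ((j : ℤ) + 1 + 1 - (k₀ : ℤ)) * ((seq n : ℂ) - μ)⁻¹)
          atTop (𝓝 0) := by
        refine squeeze_zero_norm' (a := fun n => ‖(seq n : ℂ) - μ‖⁻¹) ?_ ?_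
        · filter_upwards [hev1, hne] with n h1 ⟨hn0, _⟩
          rw [norm_mul, norm_inv]
          have hle1 : ‖((seq n : ℂ)) ^ ((j : ℤ) + 1 + 1 - (k₀ : ℤ))‖ ≤ 1 := by
            rw [norm_zpow]
            have hnorm1 : (1:ℝ) ≤ ‖(seq n : ℂ)‖ := by
              simpa using le_trans h1 (le_abs_self _)
            exact zpow_le_one_of_nonpos₀ hnorm1 (by omega)
          calc ‖((seq n : ℂ)) ^ ((j : ℤ) + 1 + 1 - (k₀ : ℤ))‖ * ‖(seq n : ℂ) - μ‖⁻¹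
              ≤ 1 * ‖(seq n : ℂ) - μ‖⁻¹ := by
                apply mul_le_mul_of_nonneg_right hle1 (by positivity)
            _ = ‖(seq n : ℂ) - μ‖⁻¹ := one_mul _
        · simpa [Pi.inv_def] using hsub_norm.inv_tendsto_atTop
      have hf2 : Tendsto (fun n => (seq n : ℂ) * ((seq n : ℂ) - μ)⁻¹) atTop (𝓝 1) := by
        have : Tendsto (fun n => 1 + μ * ((seq n : ℂ) - μ)⁻¹) atTop (𝓝 1) := by
          have := hinv.const_mul μ
          simpa using (tendsto_const_nhds (x := (1:ℂ))).add this
        refine this.congr' ?_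
        filter_upwards [hne] with n ⟨_, hnμ⟩
        have hsub : (seq n : ℂ) - μ ≠ 0 := sub_ne_zero.2 hnμ
        field_simp
        ring
      have hmain : Tendsto
          (fun n => (((seq n : ℂ)) ^ ((j : ℤ) + 1 + 1 - (k₀ : ℤ)) * ((seq n : ℂ) - μ)⁻¹)
              • ((R μ) ^ (j + 1))
            - ((seq n : ℂ) * ((seq n : ℂ) - μ)⁻¹)
              • (((seq n : ℂ)) ^ ((j : ℤ) + 1 - (k₀ : ℤ)) • (R (seq n) * (R μ) ^ j)))
          atTop (𝓝 0) := by
        have t1 := hf1.smul (tendsto_const_nhds (x := (R μ) ^ (j + 1)))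
        have t2 := hf2.smul ihj
        simpa using t1.sub t2
      refine hmain.congr' ?_
      filter_upwards [hne] with n ⟨hn0, hnμ⟩
      have hsub : (seq n : ℂ) - μ ≠ 0 := sub_ne_zero.2 hnμ
      have hid := pseudoResolvent_pow_identity Ω R hR (hseqΩ n) hμ j
      -- from hid : (λ-μ) • (R λ * R μ^(j+1)) = R μ^(j+1) - R λ * R μ^j
      have hsolve : R (seq n) * (R μ) ^ (j + 1)
          = ((seq n : ℂ) - μ)⁻¹ • ((R μ) ^ (j + 1) - R (seq n) * (R μ) ^ j) := by
        rw [← hid, smul_smul, inv_mul_cancel₀ hsub, one_smul]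
      have hzp : ((seq n : ℂ)) ^ ((j : ℤ) + 1 + 1 - (k₀ : ℤ))
          = (seq n : ℂ) * ((seq n : ℂ)) ^ ((j : ℤ) + 1 - (k₀ : ℤ)) := by
        have he : (j : ℤ) + 1 + 1 - (k₀ : ℤ) = 1 + ((j : ℤ) + 1 - (k₀ : ℤ)) := by ring
        rw [he, zpow_add₀ hn0, zpow_one]
      push_cast
      rw [hsolve, hzp]
      module
  -- conclusion for j = k₀ - 1 : R(λₙ) * R(μ)^(k₀-1) → 0
  have hzero : Tendsto (fun n => R (seq n) * (R μ) ^ (k₀ - 1)) atTop (𝓝 0) := by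
    have h := key (k₀ - 1) (by omega)
    refine h.congr (fun n => ?_)
    have : ((k₀ - 1 : ℕ) : ℤ) + 1 - (k₀ : ℤ) = 0 := by
      have : (1:ℕ) ≤ k₀ := hk₀
      push_cast [Nat.cast_sub this]
      ring
    rw [this, zpow_zero, one_smul]
  -- main approximation: for each x, R μ ^ k₀ x ∈ closure of range R μ ^ (k₀+1)
  have happrox : ∀ x : X, ((R μ) ^ k₀) x ∈
      (LinearMap.range (((R μ) ^ (k₀ + 1) : X →L[ℂ] X) : X →ₗ[ℂ] X)).topologicalClosure := by
    intro x
    set y : ℕ → X := fun n => (((seq n : ℂ) - μ) • (R (seq n) * (R μ) ^ k₀)) x with hy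
    have hmem : ∀ n, y n ∈ LinearMap.range (((R μ) ^ (k₀ + 1) : X →L[ℂ] X) : X →ₗ[ℂ] X) := by
      intro n
      have := pseudoResolvent_mem_range Ω R hR (hseqΩ n) hμ k₀ ((seq n : ℂ) - μ) x
      simpa [hy, ContinuousLinearMap.smul_apply] using this
    have hconv : Tendsto y atTop (𝓝 (((R μ) ^ k₀) x)) := by
      have hid : ∀ n, y n = ((R μ) ^ k₀) x - (R (seq n) * (R μ) ^ (k₀ - 1)) x := by
        intro n
        have h := pseudoResolvent_pow_identity Ω R hR (hseqΩ n) hμ (k₀ - 1)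
        have hk : k₀ - 1 + 1 = k₀ := by omega
        rw [hk] at h
        have := congrArg (fun T : X →L[ℂ] X => T x) h
        simpa [hy, ContinuousLinearMap.sub_apply] using this
      have hz : Tendsto (fun n => (R (seq n) * (R μ) ^ (k₀ - 1)) x) atTop (𝓝 0) := by
        have hc : Continuous fun T : X →L[ℂ] X => T x :=
          (ContinuousLinearMap.apply ℂ X x).continuous
        have := (hc.tendsto 0).comp hzero
        exact this
      have := (tendsto_const_nhds (x := ((R μ) ^ k₀) x)).sub hz
      simp only [sub_zero] at this
      exact Tendsto.congr (fun n => (hid n).symm) this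
    rw [← SetLike.mem_coe, Submodule.topologicalClosure_coe]
    exact mem_closure_of_tendsto hconv (Filter.Eventually.of_forall hmem)
  refine le_antisymm ?_ ?_
  · refine Submodule.topologicalClosure_mono ?_
    rintro y ⟨x, rfl⟩
    exact ⟨R μ x, by simp [pow_succ, ContinuousLinearMap.mul_apply]⟩
  · refine Submodule.topologicalClosure_minimal _ ?_
      (Submodule.isClosed_topologicalClosure _)
    rintro y ⟨x, rfl⟩
    exact happrox x
end

section
/- Let R : Ω → L(X) be a pseudo-resolvent satisfying (D_k): there exist ω ∈ ℝ, M > 0 with [ω, ∞) ⊆ Ω and ‖R(λ)x‖ ≤ M/(λ - ω) ‖x‖ for all λ > ω and all x ∈ ran R(ω)^{k-1}. Then R satisfies (G_k): there are M' > 0 and λₙ → ∞ with ‖λₙ^{2-k} R(λₙ)‖ ≤ M'. -/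
set_option maxHeartbeats 1000000 in
/-- The dissipativity-type condition `(D_k)` implies the growth condition `(G_k)`. -/
theorem Dk_implies_Gk
    {X : Type*} [NormedAddCommGroup X] [NormedSpace ℂ X] [CompleteSpace X]
    (Ω : Set ℂ) (hΩ : IsOpen Ω) (R : ℂ → (X →L[ℂ] X))
    (hR : ∀ l ∈ Ω, ∀ m ∈ Ω, R l - R m = (m - l) • (R l ∘L R m))
    (k : ℕ) (hk : 1 ≤ k) (ω : ℝ) (M : ℝ) (hM : 0 < M)
    (hΩsub : ∀ t : ℝ, ω ≤ t → ((t : ℂ)) ∈ Ω)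
    (hD : ∀ t : ℝ, ω < t → ∀ x ∈ LinearMap.range (((R ((ω : ℂ))) ^ (k - 1) : X →L[ℂ] X) : X →ₗ[ℂ] X),
      ‖R ((t : ℂ)) x‖ ≤ M / (t - ω) * ‖x‖) :
    ∃ M' : ℝ, 0 < M' ∧ ∃ seq : ℕ → ℝ,
      (∀ n, ((seq n : ℂ)) ∈ Ω) ∧
      Filter.Tendsto seq Filter.atTop Filter.atTop ∧
      (∀ n, ‖((seq n : ℂ)) ^ ((2 : ℤ) - (k : ℤ)) • R ((seq n : ℂ))‖ ≤ M') := by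
  set S := R ((ω : ℂ)) with hSdef
  set t₀ : ℝ := 2 * |ω| + 1 with ht₀def
  have hωΩ : ((ω : ℂ)) ∈ Ω := hΩsub ω le_rfl
  have ht₀ω : ω < t₀ := by
    have h1 := le_abs_self ω
    have h2 := abs_nonneg ω
    simp only [ht₀def]; linarith
  have ht₀1 : (1 : ℝ) ≤ t₀ := by
    have h2 := abs_nonneg ω
    simp only [ht₀def]; linarith
  -- basic facts for t ≥ t₀
  have hfacts : ∀ t : ℝ, t₀ ≤ t → ω < t ∧ 1 ≤ t - ω ∧ t - ω ≤ 2 * t ∧ t / 2 ≤ t - ω := by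
    intro t ht
    have h1 := le_abs_self ω
    have h2 := neg_abs_le ω
    have h3 : 2 * |ω| + 1 ≤ t := by rw [← ht₀def]; exact ht
    have h4 := abs_nonneg ω
    refine ⟨by linarith, by linarith, by linarith, by linarith⟩
  -- key recursion
  have hrec : ∀ (m : ℕ) (t : ℝ), ω < t →
      R ((t : ℂ)) * S ^ m = S ^ (m + 1) - (((t : ℝ) : ℂ) - (ω : ℂ)) • (R ((t : ℂ)) * S ^ (m + 1)) := by
    intro m t ht
    have h := hR ((t : ℂ)) (hΩsub t ht.le) ((ω : ℂ)) hωΩ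
    have h2 : R ((t : ℂ)) = S + (((ω : ℝ) : ℂ) - (t : ℂ)) • (R ((t : ℂ)) * S) := by
      rw [← hSdef] at h
      have := sub_eq_iff_eq_add.mp h
      simpa [ContinuousLinearMap.mul_def, add_comm] using this
    calc R ((t : ℂ)) * S ^ m
        = (S + (((ω : ℝ) : ℂ) - (t : ℂ)) • (R ((t : ℂ)) * S)) * S ^ m := by rw [← h2]
      _ = S * S ^ m + (((ω : ℝ) : ℂ) - (t : ℂ)) • (R ((t : ℂ)) * S * S ^ m) := by
          rw [add_mul, smul_mul_assoc]
      _ = S ^ (m + 1) - (((t : ℝ) : ℂ) - (ω : ℂ)) • (R ((t : ℂ)) * S ^ (m + 1)) := by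
          rw [mul_assoc, ← pow_succ']
          rw [show (((ω : ℝ) : ℂ) - (t : ℂ)) = -(((t : ℝ) : ℂ) - (ω : ℂ)) by ring, neg_smul,
            ← sub_eq_add_neg]
  -- the main bound by induction
  have hbound : ∀ j : ℕ, j ≤ k - 1 → ∃ C : ℝ, 0 ≤ C ∧ ∀ t : ℝ, t₀ ≤ t →
      ‖R ((t : ℂ)) * S ^ (k - 1 - j)‖ ≤ C * (t - ω) ^ ((j : ℤ) - 1) := by
    intro j
    induction j with
    | zero =>
      intro _
      refine ⟨M * ‖S ^ (k - 1)‖, by positivity, ?_⟩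
      intro t ht
      obtain ⟨htω, ht1, -, -⟩ := hfacts t ht
      have htω0 : (0 : ℝ) < t - ω := by linarith
      simp only [Nat.sub_zero, Nat.cast_zero, zero_sub, zpow_neg, zpow_one]
      refine ContinuousLinearMap.opNorm_le_bound _ (by positivity) ?_
      intro x
      have hx : (S ^ (k - 1)) x ∈ LinearMap.range (((R ((ω : ℂ))) ^ (k - 1) : X →L[ℂ] X) : X →ₗ[ℂ] X) :=
        LinearMap.mem_range.mpr ⟨x, rfl⟩
      have h1 := hD t htω _ hx
      have h2 : ‖(S ^ (k - 1)) x‖ ≤ ‖S ^ (k - 1)‖ * ‖x‖ := ContinuousLinearMap.le_opNorm _ _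
      have h3 : ‖(R ((t : ℂ)) * S ^ (k - 1)) x‖ = ‖R ((t : ℂ)) ((S ^ (k - 1)) x)‖ := by
        rw [ContinuousLinearMap.mul_apply]
      rw [h3]
      calc ‖R ((t : ℂ)) ((S ^ (k - 1)) x)‖ ≤ M / (t - ω) * ‖(S ^ (k - 1)) x‖ := h1
        _ ≤ M / (t - ω) * (‖S ^ (k - 1)‖ * ‖x‖) := by
            have hnn : (0:ℝ) ≤ M / (t - ω) := by positivity
            nlinarith
        _ = M * ‖S ^ (k - 1)‖ * (t - ω)⁻¹ * ‖x‖ := by field_simp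
    | succ j ih =>
      intro hj1
      obtain ⟨C, hC0, hC⟩ := ih (Nat.le_of_succ_le hj1)
      refine ⟨‖S ^ (k - 1 - j)‖ + C, by positivity, ?_⟩
      intro t ht
      obtain ⟨htω, ht1, -, -⟩ := hfacts t ht
      have htω0 : (0 : ℝ) < t - ω := by linarith
      have hm : k - 1 - (j + 1) + 1 = k - 1 - j := by omega
      have hrec' := hrec (k - 1 - (j + 1)) t htω
      rw [hm] at hrec'
      have hnorm : ‖(((t : ℝ) : ℂ) - (ω : ℂ))‖ = t - ω := by
        rw [show (((t : ℝ) : ℂ) - (ω : ℂ)) = (((t - ω : ℝ)) : ℂ) by push_cast; ring]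
        rw [Complex.norm_real, Real.norm_eq_abs, abs_of_pos htω0]
      have hzp : (0 : ℝ) < (t - ω) ^ ((j : ℤ)) := zpow_pos htω0 _
      have hzp1 : (1 : ℝ) ≤ (t - ω) ^ ((j : ℤ)) := one_le_zpow₀ ht1 (Int.natCast_nonneg j)
      calc ‖R ((t : ℂ)) * S ^ (k - 1 - (j + 1))‖
          ≤ ‖S ^ (k - 1 - j)‖ + ‖(((t : ℝ) : ℂ) - (ω : ℂ)) • (R ((t : ℂ)) * S ^ (k - 1 - j))‖ := by
            rw [hrec']; exact norm_sub_le _ _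
        _ = ‖S ^ (k - 1 - j)‖ + (t - ω) * ‖R ((t : ℂ)) * S ^ (k - 1 - j)‖ := by
            rw [norm_smul ((((t : ℝ)) : ℂ) - (ω : ℂ)) (R ((t : ℂ)) * S ^ (k - 1 - j)), hnorm]
        _ ≤ ‖S ^ (k - 1 - j)‖ + (t - ω) * (C * (t - ω) ^ ((j : ℤ) - 1)) := by
            have := hC t ht
            nlinarith [norm_nonneg (R ((t : ℂ)) * S ^ (k - 1 - j))]
        _ = ‖S ^ (k - 1 - j)‖ + C * (t - ω) ^ ((j : ℤ)) := by
            have hne : (t - ω) ≠ 0 := ne_of_gt htω0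
            rw [show ((j : ℤ)) = 1 + ((j : ℤ) - 1) by ring, zpow_add₀ hne, zpow_one]
            ring
        _ ≤ (‖S ^ (k - 1 - j)‖ + C) * (t - ω) ^ (((j : ℕ) + 1 : ℤ) - 1) := by
            rw [show (((j : ℕ) + 1 : ℤ) - 1) = (j : ℤ) by ring]
            nlinarith [norm_nonneg (S ^ (k - 1 - j))]
        _ = (‖S ^ (k - 1 - j)‖ + C) * (t - ω) ^ (((j + 1 : ℕ) : ℤ) - 1) := by push_cast; ring_nf
  obtain ⟨C, hC0, hC⟩ := hbound (k - 1) le_rfl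
  have hCfin : ∀ t : ℝ, t₀ ≤ t → ‖R ((t : ℂ))‖ ≤ C * (t - ω) ^ ((k : ℤ) - 2) := by
    intro t ht
    have h := hC t ht
    simp only [Nat.sub_self, pow_zero, mul_one] at h
    have : (((k - 1 : ℕ) : ℤ)) - 1 = (k : ℤ) - 2 := by omega
    rwa [this] at h
  refine ⟨C * 2 ^ k + 1, by positivity, fun n => t₀ + n, ?_, ?_, ?_⟩
  · intro n
    apply hΩsub
    show ω ≤ t₀ + (n : ℝ)
    have hn : (0 : ℝ) ≤ (n : ℝ) := Nat.cast_nonneg n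
    have := ht₀ω.le
    linarith
  · exact Filter.tendsto_atTop_add_const_left _ _ tendsto_natCast_atTop_atTop
  · intro n
    show ‖(((t₀ + (n : ℝ) : ℝ)) : ℂ) ^ ((2 : ℤ) - (k : ℤ)) • R (((t₀ + (n : ℝ) : ℝ)) : ℂ)‖ ≤
      C * 2 ^ k + 1
    set t : ℝ := t₀ + n with htdef
    have ht : t₀ ≤ t := by
      have : (0 : ℝ) ≤ (n : ℝ) := Nat.cast_nonneg n
      simp only [htdef]; linarith
    obtain ⟨htω, ht1, ht2, ht3⟩ := hfacts t ht
    have ht0 : (0 : ℝ) < t := lt_of_lt_of_le (lt_of_lt_of_le zero_lt_one ht₀1) ht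
    have htω0 : (0 : ℝ) < t - ω := by linarith
    have hnz : ‖(((t : ℝ) : ℂ)) ^ ((2 : ℤ) - (k : ℤ))‖ = t ^ ((2 : ℤ) - (k : ℤ)) := by
      rw [norm_zpow, Complex.norm_real, Real.norm_eq_abs, abs_of_pos ht0]
    rw [norm_smul ((((t : ℝ)) : ℂ) ^ ((2 : ℤ) - (k : ℤ))) (R ((t : ℂ))), hnz]
    have hRb := hCfin t ht
    have hkey : t ^ ((2 : ℤ) - (k : ℤ)) * (C * (t - ω) ^ ((k : ℤ) - 2)) ≤ C * 2 ^ k := by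
      rcases eq_or_lt_of_le hk with h1 | h2
      · -- k = 1
        subst h1
        have htle : t ≤ 2 * (t - ω) := by linarith
        have e1 : ((2 : ℤ) - ((1 : ℕ) : ℤ)) = 1 := by norm_num
        have e2 : (((1 : ℕ) : ℤ) - 2) = -1 := by norm_num
        rw [e1, e2, zpow_one, zpow_neg_one]
        have h4 : t * (t - ω)⁻¹ ≤ 2 := by
          rw [← div_eq_mul_inv, div_le_iff₀ htω0]; linarith
        have h5 : (0 : ℝ) < (t - ω)⁻¹ := by positivity
        calc t * (C * (t - ω)⁻¹) = C * (t * (t - ω)⁻¹) := by ring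
          _ ≤ C * 2 := by nlinarith
          _ = C * 2 ^ 1 := by norm_num
      · -- k ≥ 2
        set m : ℕ := k - 2 with hmdef
        have e1 : ((2 : ℤ) - (k : ℤ)) = -(m : ℤ) := by omega
        have e2 : ((k : ℤ) - 2) = (m : ℤ) := by omega
        rw [e1, e2, zpow_neg, zpow_natCast, zpow_natCast]
        have htm : (0 : ℝ) < t ^ m := by positivity
        have hle : (t - ω) ^ m ≤ 2 ^ m * t ^ m := by
          rw [← mul_pow]
          exact pow_le_pow_left₀ htω0.le (by linarith) m
        have h2m : (2 : ℝ) ^ m ≤ 2 ^ k := by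
          apply pow_le_pow_right₀ one_le_two
          omega
        calc (t ^ m)⁻¹ * (C * (t - ω) ^ m)
            ≤ (t ^ m)⁻¹ * (C * (2 ^ m * t ^ m)) := by gcongr (t ^ m)⁻¹ * (C * ?_)
          _ = C * 2 ^ m := by field_simp
          _ ≤ C * 2 ^ k := by nlinarith
    have hzpos : (0 : ℝ) ≤ t ^ ((2 : ℤ) - (k : ℤ)) := by positivity
    calc t ^ ((2 : ℤ) - (k : ℤ)) * ‖R ((t : ℂ))‖
        ≤ t ^ ((2 : ℤ) - (k : ℤ)) * (C * (t - ω) ^ ((k : ℤ) - 2)) :=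
          mul_le_mul_of_nonneg_left hRb hzpos
      _ ≤ C * 2 ^ k := hkey
      _ ≤ C * 2 ^ k + 1 := by linarith
end

section
/- Let R : Ω → L(X) be a pseudo-resolvent satisfying (D_k) with parameter ω. Then for every y in the closure of ran R(ω)^k one has λ R(λ) y → y as λ → ∞ along (ω, ∞); consequently ker R(ω) ∩ closure(ran R(ω)^k) = {0}. -/
open Filter Topology

/-- Under `(D_k)`, `λ R(λ) y → y` as `λ → ∞` for every `y` in the closure of
`ran R(ω)^k`; consequently `ker R(ω) ∩ closure(ran R(ω)^k) = {0}`. -/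
theorem Dk_lambdaR_tendsto
    {X : Type*} [NormedAddCommGroup X] [NormedSpace ℂ X] [CompleteSpace X]
    (Ω : Set ℂ) (hΩ : IsOpen Ω) (R : ℂ → (X →L[ℂ] X))
    (hR : ∀ l ∈ Ω, ∀ m ∈ Ω, R l - R m = (m - l) • (R l ∘L R m))
    (k : ℕ) (hk : 1 ≤ k) (ω : ℝ) (M : ℝ) (hM : 0 < M)
    (hΩsub : ∀ t : ℝ, ω ≤ t → ((t : ℂ)) ∈ Ω)
    (hD : ∀ t : ℝ, ω < t → ∀ x ∈ LinearMap.range (((R ((ω : ℂ))) ^ (k - 1) : X →L[ℂ] X) : X →ₗ[ℂ] X),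
      ‖R ((t : ℂ)) x‖ ≤ M / (t - ω) * ‖x‖) :
    (∀ y ∈ closure ((LinearMap.range (((R ((ω : ℂ))) ^ k : X →L[ℂ] X) : X →ₗ[ℂ] X) : Submodule ℂ X) : Set X),
      Filter.Tendsto (fun t : ℝ => ((t : ℂ)) • R ((t : ℂ)) y) Filter.atTop (nhds y)) ∧
    (∀ y : X, R ((ω : ℂ)) y = 0 →
      y ∈ closure ((LinearMap.range (((R ((ω : ℂ))) ^ k : X →L[ℂ] X) : X →ₗ[ℂ] X) : Submodule ℂ X) : Set X) →
      y = 0) := by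
  set A := R ((ω : ℂ)) with hA
  -- range of A^k is contained in range of A^(k-1)
  have hsub : ((LinearMap.range (((A ^ k : X →L[ℂ] X) : X →ₗ[ℂ] X)) : Submodule ℂ X) : Set X) ⊆
      ((LinearMap.range (((A ^ (k - 1) : X →L[ℂ] X) : X →ₗ[ℂ] X)) : Submodule ℂ X) : Set X) := by
    rintro y ⟨x, rfl⟩
    have hk' : A ^ k = A ^ (k - 1) * A := by
      rw [← pow_succ]; congr 1; omega
    exact ⟨A x, by rw [hk']; rfl⟩
  -- the (D_k) bound extends to the closure of ran A^(k-1)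
  have bound : ∀ t : ℝ, ω < t →
      ∀ y ∈ closure ((LinearMap.range (((A ^ (k - 1) : X →L[ℂ] X) : X →ₗ[ℂ] X)) : Submodule ℂ X) : Set X),
      ‖R ((t : ℂ)) y‖ ≤ M / (t - ω) * ‖y‖ := by
    intro t ht
    have hclosed : IsClosed {y : X | ‖R ((t : ℂ)) y‖ ≤ M / (t - ω) * ‖y‖} :=
      isClosed_le ((R ((t : ℂ))).continuous.norm) (continuous_const.mul continuous_norm)
    exact fun y hy => closure_minimal (fun x hx => hD t ht x hx) hclosed hy
  have main : ∀ y ∈ closure ((LinearMap.range (((A ^ k : X →L[ℂ] X) : X →ₗ[ℂ] X)) : Submodule ℂ X) : Set X),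
      Filter.Tendsto (fun t : ℝ => ((t : ℂ)) • R ((t : ℂ)) y) Filter.atTop (nhds y) := by
    intro y hy
    have hy1 : y ∈ closure ((LinearMap.range (((A ^ (k - 1) : X →L[ℂ] X) : X →ₗ[ℂ] X)) : Submodule ℂ X) : Set X) :=
      closure_mono hsub hy
    rw [Metric.tendsto_nhds]
    intro ε hε
    set δ : ℝ := ε / (2 * (2 * M + 1)) with hδdef
    have hδ : 0 < δ := by positivity
    obtain ⟨y', hy'Sk, hdist⟩ := Metric.mem_closure_iff.mp hy δ hδ
    obtain ⟨x, hx⟩ := hy'Sk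
    set z : X := (A ^ (k - 1)) x with hzdef
    have hz : z ∈ LinearMap.range (((A ^ (k - 1) : X →L[ℂ] X) : X →ₗ[ℂ] X)) := ⟨x, rfl⟩
    have hyz : A z = y' := by
      have hk' : A ^ k = A * A ^ (k - 1) := by
        rw [← pow_succ']; congr 1; omega
      rw [← hx, hk']; rfl
    -- y - y' lies in the closure of ran A^(k-1)
    have hyy' : y - y' ∈ closure ((LinearMap.range (((A ^ (k - 1) : X →L[ℂ] X) : X →ₗ[ℂ] X)) : Submodule ℂ X) : Set X) := by
      have h1 : y ∈ (LinearMap.range (((A ^ (k - 1) : X →L[ℂ] X) : X →ₗ[ℂ] X))).topologicalClosure := hy1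
      have h2 : y' ∈ (LinearMap.range (((A ^ (k - 1) : X →L[ℂ] X) : X →ₗ[ℂ] X))).topologicalClosure :=
        subset_closure (hsub ⟨x, hx⟩)
      exact Submodule.sub_mem _ h1 h2
    set T : ℝ := 2 * |ω| + 1 with hTdef
    have hTω : ω < T := by
      have := abs_nonneg ω; have := le_abs_self ω; simp only [hTdef]; linarith
    -- the term for y' tends to 0
    have h2 : Tendsto (fun t : ℝ => ((t : ℂ)) • R ((t : ℂ)) y' - y') atTop (nhds 0) := by
      refine squeeze_zero_norm' (a := fun t : ℝ => (2 * M * ‖z‖ + |ω| * ‖A z‖) / (t - ω)) ?_ ?_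
      · filter_upwards [eventually_ge_atTop T] with t hTt
        have htω : ω < t := lt_of_lt_of_le hTω hTt
        have ht0 : (0 : ℝ) < t := by
          have := abs_nonneg ω; simp only [hTdef] at hTt; linarith
        have htne : ((ω : ℂ)) - ((t : ℂ)) ≠ 0 := by
          intro h
          have : (ω : ℂ) = (t : ℂ) := by linear_combination h
          exact (ne_of_lt htω) (by exact_mod_cast this)
        -- resolvent identity
        have hid := hR ((t : ℂ)) (hΩsub t htω.le) ((ω : ℂ)) (hΩsub ω le_rfl)
        have hidz : R ((t : ℂ)) z - A z = ((ω : ℂ) - (t : ℂ)) • (R ((t : ℂ)) (A z)) := by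
          have := congrArg (fun (T : X →L[ℂ] X) => T z) hid
          simpa using this
        have hRAz : R ((t : ℂ)) (A z) =
            ((ω : ℂ) - (t : ℂ))⁻¹ • (R ((t : ℂ)) z - A z) := by
          rw [hidz, smul_smul, inv_mul_cancel₀ htne, one_smul]
        set c : ℂ := (t : ℂ) * ((ω : ℂ) - (t : ℂ))⁻¹ with hcdef
        have key : ((t : ℂ)) • R ((t : ℂ)) y' - y' = c • R ((t : ℂ)) z - (c + 1) • A z := by
          rw [← hyz, hRAz, smul_smul, ← hcdef, smul_sub, add_smul, one_smul]
          abel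
        have hnormc : ‖c‖ = t / (t - ω) := by
          rw [hcdef, norm_mul, norm_inv]
          have h1 : ‖((t : ℂ))‖ = t := by
            rw [Complex.norm_real, Real.norm_eq_abs, abs_of_pos ht0]
          have h2 : ‖((ω : ℂ)) - ((t : ℂ))‖ = t - ω := by
            have : ((ω : ℂ)) - ((t : ℂ)) = (((ω - t : ℝ)) : ℂ) := by push_cast; ring
            rw [this, Complex.norm_real, Real.norm_eq_abs, abs_of_neg (by linarith), neg_sub]
          rw [h1, h2, div_eq_mul_inv]
        have hnormc1 : ‖c + 1‖ = |ω| / (t - ω) := by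
          have : c + 1 = ((ω : ℂ)) * (((ω : ℂ)) - ((t : ℂ)))⁻¹ := by
            rw [hcdef]; field_simp; ring
          rw [this, norm_mul, norm_inv]
          have h1 : ‖((ω : ℂ))‖ = |ω| := by rw [Complex.norm_real, Real.norm_eq_abs]
          have h2 : ‖((ω : ℂ)) - ((t : ℂ))‖ = t - ω := by
            have : ((ω : ℂ)) - ((t : ℂ)) = (((ω - t : ℝ)) : ℂ) := by push_cast; ring
            rw [this, Complex.norm_real, Real.norm_eq_abs, abs_of_neg (by linarith), neg_sub]
          rw [h1, h2, div_eq_mul_inv]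
        have hRz : ‖R ((t : ℂ)) z‖ ≤ M / (t - ω) * ‖z‖ := hD t htω z hz
        have htfrac : t / (t - ω) ≤ 2 := by
          rw [div_le_iff₀ (by linarith)]
          have h1 : 2 * |ω| < t := by simp only [hTdef] at hTt; linarith
          have h2 : ω ≤ |ω| := le_abs_self ω
          linarith
        calc ‖((t : ℂ)) • R ((t : ℂ)) y' - y'‖
            ≤ ‖c‖ * ‖R ((t : ℂ)) z‖ + ‖c + 1‖ * ‖A z‖ := by
              rw [key]; exact (norm_sub_le _ _).trans (by rw [norm_smul, norm_smul])
          _ ≤ (t / (t - ω)) * (M / (t - ω) * ‖z‖) + (|ω| / (t - ω)) * ‖A z‖ := by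
              rw [hnormc, hnormc1]
              have hc0 : 0 ≤ t / (t - ω) := div_nonneg ht0.le (by linarith)
              gcongr
          _ ≤ 2 * (M / (t - ω) * ‖z‖) + (|ω| / (t - ω)) * ‖A z‖ := by
              have : (0 : ℝ) ≤ M / (t - ω) * ‖z‖ :=
                mul_nonneg (div_nonneg hM.le (by linarith)) (norm_nonneg _)
              nlinarith
          _ = (2 * M * ‖z‖ + |ω| * ‖A z‖) / (t - ω) := by ring
      · apply Tendsto.comp (f := fun t : ℝ => t - ω)
          (g := fun s : ℝ => (2 * M * ‖z‖ + |ω| * ‖A z‖) / s)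
        · simpa [div_eq_mul_inv] using
            (tendsto_inv_atTop_zero.const_mul (2 * M * ‖z‖ + |ω| * ‖A z‖)).congr
              (fun s => rfl)
        · exact tendsto_atTop_add_const_right _ _ tendsto_id
    have h2' : ∀ᶠ t : ℝ in atTop, ‖((t : ℂ)) • R ((t : ℂ)) y' - y'‖ < ε / 2 := by
      have := Metric.tendsto_nhds.mp h2 (ε / 2) (by positivity)
      filter_upwards [this] with t ht
      simpa [dist_zero_right] using ht
    filter_upwards [h2', eventually_ge_atTop T] with t h2t hTt
    have htω : ω < t := lt_of_lt_of_le hTω hTt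
    have ht0 : (0 : ℝ) < t := by
      have := abs_nonneg ω; simp only [hTdef] at hTt; linarith
    have htfrac : t / (t - ω) ≤ 2 := by
      rw [div_le_iff₀ (by linarith)]
      have h1 : 2 * |ω| < t := by simp only [hTdef] at hTt; linarith
      have h2 : ω ≤ |ω| := le_abs_self ω
      linarith
    have hsplit : ((t : ℂ)) • R ((t : ℂ)) y - y =
        ((t : ℂ)) • R ((t : ℂ)) (y - y') + (((t : ℂ)) • R ((t : ℂ)) y' - y') + (y' - y) := by
      rw [map_sub, smul_sub]; abel
    have hterm1 : ‖((t : ℂ)) • R ((t : ℂ)) (y - y')‖ ≤ 2 * M * ‖y - y'‖ := by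
      rw [norm_smul]
      have h1 : ‖((t : ℂ))‖ = t := by
        rw [Complex.norm_real, Real.norm_eq_abs, abs_of_pos ht0]
      rw [h1]
      calc t * ‖R ((t : ℂ)) (y - y')‖ ≤ t * (M / (t - ω) * ‖y - y'‖) := by
            have := bound t htω (y - y') hyy'
            exact mul_le_mul_of_nonneg_left this ht0.le
        _ = (t / (t - ω)) * (M * ‖y - y'‖) := by ring
        _ ≤ 2 * (M * ‖y - y'‖) := by
            have : (0 : ℝ) ≤ M * ‖y - y'‖ := by positivity
            nlinarith
        _ = 2 * M * ‖y - y'‖ := by ring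
    have hnd : ‖y - y'‖ < δ := by rwa [← dist_eq_norm]
    rw [dist_eq_norm, hsplit]
    calc ‖((t : ℂ)) • R ((t : ℂ)) (y - y') + (((t : ℂ)) • R ((t : ℂ)) y' - y') + (y' - y)‖
        ≤ ‖((t : ℂ)) • R ((t : ℂ)) (y - y')‖ + ‖((t : ℂ)) • R ((t : ℂ)) y' - y'‖ + ‖y' - y‖ :=
          norm_add₃_le
      _ < 2 * M * δ + ε / 2 + δ := by
          have h3 : ‖y' - y‖ < δ := by rwa [norm_sub_rev]
          have h1 : ‖((t : ℂ)) • R ((t : ℂ)) (y - y')‖ ≤ 2 * M * δ :=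
            hterm1.trans (by nlinarith)
          linarith
      _ = (2 * M + 1) * δ + ε / 2 := by ring
      _ = ε := by rw [hδdef]; field_simp; ring
  refine ⟨main, ?_⟩
  intro y hy0 hycl
  have hzero : ∀ᶠ t : ℝ in atTop, ((t : ℂ)) • R ((t : ℂ)) y = 0 := by
    filter_upwards [eventually_ge_atTop ω] with t ht
    have hid := hR ((t : ℂ)) (hΩsub t ht) ((ω : ℂ)) (hΩsub ω le_rfl)
    have := congrArg (fun (T : X →L[ℂ] X) => T y) hid
    simp only [ContinuousLinearMap.sub_apply, ContinuousLinearMap.smul_apply,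
      ContinuousLinearMap.comp_apply] at this
    rw [← hA, hy0] at this
    simp only [map_zero, smul_zero] at this
    have hRty : R ((t : ℂ)) y = 0 := by
      have : R ((t : ℂ)) y - 0 = 0 := this
      simpa using this
    rw [hRty, smul_zero]
  have h1 : Tendsto (fun t : ℝ => ((t : ℂ)) • R ((t : ℂ)) y) atTop (nhds y) := main y hycl
  have h0 : Tendsto (fun t : ℝ => ((t : ℂ)) • R ((t : ℂ)) y) atTop (nhds 0) :=
    Tendsto.congr' (hzero.mono fun t ht => ht.symm) tendsto_const_nhds
  exact tendsto_nhds_unique h1 h0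
end

section
/- Let R : Ω → L(X) be a pseudo-resolvent satisfying (D_k) with parameter ω. Then ker R(ω)^ℓ ∩ closure(ran R(ω)^k) = {0} for every ℓ ∈ ℕ; in particular closure(ran R(ω)^k) ∩ ker R(ω)^k = {0}. -/
set_option maxHeartbeats 800000


/-- Under `(D_k)` (and stabilization of the closures of the ranges),
`ker R(ω)^ℓ ∩ closure(ran R(ω)^k) = {0}` for every `ℓ`. -/
theorem Dk_ker_inter_closure_range
    {X : Type*} [NormedAddCommGroup X] [NormedSpace ℂ X] [CompleteSpace X]
    (Ω : Set ℂ) (hΩ : IsOpen Ω) (R : ℂ → (X →L[ℂ] X))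
    (hR : ∀ l ∈ Ω, ∀ m ∈ Ω, R l - R m = (m - l) • (R l ∘L R m))
    (k : ℕ) (hk : 1 ≤ k) (ω : ℝ) (M : ℝ) (hM : 0 < M)
    (hΩsub : ∀ t : ℝ, ω ≤ t → ((t : ℂ)) ∈ Ω)
    (hD : ∀ t : ℝ, ω < t → ∀ x ∈ LinearMap.range (((R ((ω : ℂ))) ^ (k - 1) : X →L[ℂ] X) : X →ₗ[ℂ] X),
      ‖R ((t : ℂ)) x‖ ≤ M / (t - ω) * ‖x‖)
    (hstab : (LinearMap.range (((R ((ω : ℂ))) ^ (k + 1) : X →L[ℂ] X) : X →ₗ[ℂ] X)).topologicalClosure =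
      (LinearMap.range (((R ((ω : ℂ))) ^ k : X →L[ℂ] X) : X →ₗ[ℂ] X)).topologicalClosure) :
    ∀ ℓ : ℕ, ∀ y : X, ((R ((ω : ℂ))) ^ ℓ) y = 0 →
      y ∈ closure ((LinearMap.range (((R ((ω : ℂ))) ^ k : X →L[ℂ] X) : X →ₗ[ℂ] X) : Submodule ℂ X) : Set X) →
      y = 0 := by
  set A : X →L[ℂ] X := R ((ω : ℂ)) with hA
  set Yset : Set X := ((LinearMap.range (((A ^ k : X →L[ℂ] X)) : X →ₗ[ℂ] X) : Submodule ℂ X) : Set X) with hYset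
  have hωΩ : ((ω : ℂ)) ∈ Ω := hΩsub ω le_rfl
  -- elements of ran A^k are in ran A^(k-1)
  have hransub : ∀ u : X, ((A ^ k) u) ∈ LinearMap.range ((((A : X →L[ℂ] X) ^ (k - 1) : X →L[ℂ] X)) : X →ₗ[ℂ] X) := by
    intro u
    refine ⟨A u, ?_⟩
    have hpow : (A : X →L[ℂ] X) ^ (k - 1) * A = A ^ k := by
      rw [← pow_succ, Nat.sub_add_cancel hk]
    calc ((A : X →L[ℂ] X) ^ (k - 1)) (A u) = ((A ^ (k-1)) * A) u := rfl
      _ = (A ^ k) u := by rw [hpow]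
  -- the (D_k) bound extends to the closure of ran A^k
  have hbound : ∀ t : ℝ, ω < t → ∀ w ∈ closure Yset,
      ‖R ((t : ℂ)) w‖ ≤ M / (t - ω) * ‖w‖ := by
    intro t ht w hw
    have hclosed : IsClosed {w : X | ‖R ((t : ℂ)) w‖ ≤ M / (t - ω) * ‖w‖} :=
      isClosed_le ((R ((t:ℂ))).continuous.norm) (continuous_const.mul continuous_norm)
    have hsub : Yset ⊆ {w : X | ‖R ((t : ℂ)) w‖ ≤ M / (t - ω) * ‖w‖} := by
      rintro _ ⟨u, rfl⟩
      exact hD t ht _ (hransub u)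
    exact closure_minimal hsub hclosed hw
  -- key step: ker A ∩ closure(ran A^k) = 0
  have key : ∀ z : X, A z = 0 → z ∈ closure Yset → z = 0 := by
    intro z hz hzY
    -- R t z = 0 for all t ≥ ω
    have hRz : ∀ t : ℝ, ω ≤ t → R ((t : ℂ)) z = 0 := by
      intro t ht
      have h := hR ((t:ℂ)) (hΩsub t ht) ((ω:ℂ)) hωΩ
      have h2 := congrArg (fun T : X →L[ℂ] X => T z) h
      simp only [ContinuousLinearMap.sub_apply, ContinuousLinearMap.smul_apply,
        ContinuousLinearMap.coe_comp', Function.comp_apply, ← hA, hz, map_zero,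
        smul_zero] at h2
      simpa using h2
    -- show ‖z‖ ≤ ε for every ε > 0
    have hnorm : ∀ ε : ℝ, 0 < ε → ‖z‖ ≤ ε := by
      intro ε hε
      have h2M : (0:ℝ) < 2 + 2*M := by linarith
      set δ : ℝ := ε / (2 + 2*M) with hδdef
      have hδ : 0 < δ := div_pos hε h2M
      clear_value δ
      -- z ∈ closure (ran A^(k+1))
      have hz' : z ∈ closure ((LinearMap.range ((((A : X →L[ℂ] X) ^ (k+1) : X →L[ℂ] X)) : X →ₗ[ℂ] X) : Submodule ℂ X) : Set X) := by
        have hcl : closure ((LinearMap.range ((((A : X →L[ℂ] X) ^ (k+1) : X →L[ℂ] X)) : X →ₗ[ℂ] X) : Submodule ℂ X) : Set X)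
            = closure Yset := by
          rw [← Submodule.topologicalClosure_coe, ← Submodule.topologicalClosure_coe, hstab]
        rw [hcl]; exact hzY
      obtain ⟨x, hxmem, hxz⟩ := Metric.mem_closure_iff.mp hz' δ hδ
      obtain ⟨u, hu⟩ := hxmem
      set z₁ : X := ((A : X →L[ℂ] X) ^ k) u with hz₁
      clear_value z₁
      have hxz₁ : A z₁ = x := by
        rw [hz₁, ← hu]
        calc A (((A : X →L[ℂ] X) ^ k) u) = ((A * (A ^ k))) u := rfl
          _ = ((A : X →L[ℂ] X) ^ (k+1)) u := by rw [← pow_succ']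
      have hzx : ‖z - x‖ < δ := by rwa [← dist_eq_norm]
      -- choose t large
      set C : ℝ := |ω| * ‖x‖ + 2 * M * ‖z₁‖ with hC
      have hC0 : 0 ≤ C := by positivity
      set t : ℝ := max (max (2*ω) 1) (max (ω+1) (ω + (C+1)/δ)) with ht
      have ht2ω : 2*ω ≤ t := le_trans (le_max_left _ _) (le_max_left _ _)
      have ht1 : 1 ≤ t := le_trans (le_max_right _ _) (le_max_left _ _)
      have htω1 : ω + 1 ≤ t := le_trans (le_max_left _ _) (le_max_right _ _)
      have htC : ω + (C+1)/δ ≤ t := le_trans (le_max_right _ _) (le_max_right _ _)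
      clear_value t
      have htω : ω < t := by linarith
      have hpos : 0 < t - ω := by linarith
      have ht0 : 0 < t := by linarith
      have hfrac : t / (t - ω) ≤ 2 := by
        rw [div_le_iff₀ hpos]; linarith
      have hCd : C / (t - ω) ≤ δ := by
        rw [div_le_iff₀ hpos]
        have h1 : (C+1)/δ ≤ t - ω := by linarith
        have h2 : C + 1 ≤ δ * (t - ω) := by
          rw [← div_le_iff₀' hδ]; linarith [h1]
        nlinarith [hδ.le]
      set B : X →L[ℂ] X := R ((t:ℂ)) with hB
      clear_value B
      -- resolvent identity applied to z₁
      have hres : ((t:ℂ) - (ω:ℂ)) • (B x) = x - B z₁ := by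
        have h := hR ((t:ℂ)) (hΩsub t htω.le) ((ω:ℂ)) hωΩ
        have h2 := congrArg (fun T : X →L[ℂ] X => T z₁) h
        simp only [ContinuousLinearMap.sub_apply, ContinuousLinearMap.smul_apply,
          ContinuousLinearMap.coe_comp', Function.comp_apply, ← hA, ← hB, hxz₁] at h2
        -- h2 : B z₁ - x = (ω - t) • B x
        have : x - B z₁ = -((ω:ℂ) - (t:ℂ)) • B x := by
          rw [neg_smul, ← h2]; abel
        rw [this]; ring_nf
      -- key estimate: ‖t • B x - x‖ ≤ C / (t - ω)
      have hkey : ‖(t:ℂ) • (B x) - x‖ ≤ C / (t - ω) := by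
        have heq : ((t:ℂ) - (ω:ℂ)) • ((t:ℂ) • (B x) - x)
            = (ω:ℂ) • x - (t:ℂ) • (B z₁) := by
          calc ((t:ℂ) - (ω:ℂ)) • ((t:ℂ) • (B x) - x)
              = (t:ℂ) • (((t:ℂ) - (ω:ℂ)) • (B x)) - ((t:ℂ) - (ω:ℂ)) • x := by
                rw [smul_sub, smul_comm]
            _ = (t:ℂ) • (x - B z₁) - ((t:ℂ) - (ω:ℂ)) • x := by rw [hres]
            _ = (ω:ℂ) • x - (t:ℂ) • (B z₁) := by
                rw [smul_sub, sub_smul]; abel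
        have hnorml : ‖((t:ℂ) - (ω:ℂ)) • ((t:ℂ) • (B x) - x)‖
            = (t - ω) * ‖(t:ℂ) • (B x) - x‖ := by
          rw [norm_smul]
          congr 1
          rw [show ((t:ℂ) - (ω:ℂ)) = ((t - ω : ℝ) : ℂ) by push_cast; ring,
            Complex.norm_real, Real.norm_eq_abs, abs_of_pos hpos]
        have hnormr : ‖(ω:ℂ) • x - (t:ℂ) • (B z₁)‖ ≤ C := by
          have hz₁mem : z₁ ∈ LinearMap.range ((((A : X →L[ℂ] X) ^ (k-1) : X →L[ℂ] X)) : X →ₗ[ℂ] X) := hz₁ ▸ hransub u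
          have hBz₁ : ‖B z₁‖ ≤ M / (t - ω) * ‖z₁‖ := hB ▸ hD t htω z₁ hz₁mem
          have h1 : ‖(ω:ℂ) • x - (t:ℂ) • (B z₁)‖ ≤ ‖(ω:ℂ) • x‖ + ‖(t:ℂ) • (B z₁)‖ :=
            norm_sub_le _ _
          have h2 : ‖(ω:ℂ) • x‖ = |ω| * ‖x‖ := by
            rw [norm_smul, Complex.norm_real, Real.norm_eq_abs]
          have h3 : ‖(t:ℂ) • (B z₁)‖ = t * ‖B z₁‖ := by
            rw [norm_smul, Complex.norm_real, Real.norm_eq_abs, abs_of_pos ht0]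
          have h4 : t * ‖B z₁‖ ≤ 2 * M * ‖z₁‖ := by
            calc t * ‖B z₁‖ ≤ t * (M / (t - ω) * ‖z₁‖) := by
                  apply mul_le_mul_of_nonneg_left hBz₁ ht0.le
              _ = (t / (t - ω)) * (M * ‖z₁‖) := by ring
              _ ≤ 2 * (M * ‖z₁‖) := by
                  apply mul_le_mul_of_nonneg_right hfrac (by positivity)
              _ = 2 * M * ‖z₁‖ := by ring
          rw [h3] at h1; rw [hC]; linarith
        rw [div_eq_inv_mul]
        calc ‖(t:ℂ) • (B x) - x‖
            = (t - ω)⁻¹ * ((t - ω) * ‖(t:ℂ) • (B x) - x‖) := by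
              rw [inv_mul_cancel_left₀ hpos.ne']
          _ = (t - ω)⁻¹ * ‖((t:ℂ) - (ω:ℂ)) • ((t:ℂ) • (B x) - x)‖ := by rw [hnorml]
          _ = (t - ω)⁻¹ * ‖(ω:ℂ) • x - (t:ℂ) • (B z₁)‖ := by rw [heq]
          _ ≤ (t - ω)⁻¹ * C := by
              apply mul_le_mul_of_nonneg_left hnormr (by positivity)
      -- x - z lies in closure Yset
      have hxY : x ∈ closure Yset := by
        apply subset_closure
        refine ⟨A u, ?_⟩
        rw [← hu]
        calc ((A : X →L[ℂ] X) ^ k) (A u) = ((A ^ k) * A) u := rfl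
          _ = ((A : X →L[ℂ] X) ^ (k+1)) u := by rw [← pow_succ]
      have hxzY : x - z ∈ closure Yset := by
        have h1 : x - z ∈ (LinearMap.range ((((A : X →L[ℂ] X) ^ k : X →L[ℂ] X)) : X →ₗ[ℂ] X)).topologicalClosure := by
          apply Submodule.sub_mem
          · rwa [← Submodule.topologicalClosure_coe] at hxY
          · rwa [← Submodule.topologicalClosure_coe] at hzY
        rwa [← Submodule.topologicalClosure_coe]
      have hBxz : ‖(t:ℂ) • (B (x - z))‖ ≤ 2 * M * δ := by
        have h1 : ‖B (x - z)‖ ≤ M / (t - ω) * ‖x - z‖ := hB ▸ hbound t htω _ hxzY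
        have h2 : ‖(t:ℂ) • (B (x - z))‖ = t * ‖B (x - z)‖ := by
          rw [norm_smul, Complex.norm_real, Real.norm_eq_abs, abs_of_pos ht0]
        rw [h2]
        calc t * ‖B (x - z)‖ ≤ t * (M / (t - ω) * ‖x - z‖) := by
              apply mul_le_mul_of_nonneg_left h1 ht0.le
          _ = (t / (t - ω)) * (M * ‖x - z‖) := by ring
          _ ≤ 2 * (M * ‖x - z‖) := by
              apply mul_le_mul_of_nonneg_right hfrac (by positivity)
          _ ≤ 2 * (M * δ) := by
              have : ‖x - z‖ < δ := by rwa [norm_sub_rev]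
              nlinarith [hM.le]
          _ = 2 * M * δ := by ring
      -- assemble
      have hBz : B z = 0 := hB ▸ hRz t htω.le
      have hsplit : (t:ℂ) • (B x) - (t:ℂ) • (B z) = (t:ℂ) • (B (x - z)) := by
        rw [map_sub, smul_sub]
      calc ‖z‖ = ‖(z - x) + (x - (t:ℂ) • (B x)) + ((t:ℂ) • (B x) - (t:ℂ) • (B z))‖ := by
            rw [hBz, smul_zero, sub_zero]
            congr 1
            abel
        _ ≤ ‖z - x‖ + ‖x - (t:ℂ) • (B x)‖ + ‖(t:ℂ) • (B x) - (t:ℂ) • (B z)‖ :=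
            norm_add₃_le
        _ ≤ δ + δ + 2 * M * δ := by
            have h1 : ‖x - (t:ℂ) • (B x)‖ ≤ δ := by
              rw [norm_sub_rev]; exact le_trans hkey hCd
            rw [hsplit]
            exact add_le_add (add_le_add hzx.le h1) hBxz
        _ = (2 + 2*M) * δ := by ring
        _ = ε := by rw [hδdef, mul_comm, div_mul_cancel₀ _ h2M.ne']
    have : ‖z‖ ≤ 0 := le_of_forall_pos_le_add (by intro ε hε; simpa using hnorm ε hε)
    exact norm_le_zero_iff.mp this
  -- closure of ran A^k is invariant under A^n
  have hinv : ∀ n : ℕ, ∀ w ∈ closure Yset, ((A : X →L[ℂ] X) ^ n) w ∈ closure Yset := by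
    intro n
    have hmaps : Set.MapsTo ((A : X →L[ℂ] X) ^ n) Yset Yset := by
      rintro _ ⟨u, rfl⟩
      refine ⟨((A : X →L[ℂ] X) ^ n) u, ?_⟩
      calc ((A : X →L[ℂ] X) ^ k) (((A : X →L[ℂ] X) ^ n) u)
          = ((A ^ k) * (A ^ n)) u := rfl
        _ = ((A ^ n) * (A ^ k)) u := by rw [pow_mul_comm]
        _ = ((A : X →L[ℂ] X) ^ n) ((A ^ k) u) := rfl
    exact fun w hw => (hmaps.closure ((A ^ n).continuous)) hw
  intro ℓ
  induction ℓ with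
  | zero => intro y hy _; simpa using hy
  | succ n ih =>
    intro y hy hyY
    have hz1 : ((A : X →L[ℂ] X) ^ n) y ∈ closure Yset := hinv n y hyY
    have hz2 : A (((A : X →L[ℂ] X) ^ n) y) = 0 := by
      have : (A : X →L[ℂ] X) ^ (n+1) = A * (A ^ n) := pow_succ' A n
      calc A (((A : X →L[ℂ] X) ^ n) y) = ((A * (A ^ n))) y := rfl
        _ = ((A : X →L[ℂ] X) ^ (n+1)) y := by rw [← this]
        _ = 0 := hy
    exact ih y (key _ hz2 hz1) hyY
end

section
/- Let L be a linear relation in a Banach space X satisfying the ω-dissipativity condition: ‖y - λx‖ ≥ (λ - ω)‖x‖ for all λ > ω and all (x,y) ∈ L. Then for every (x,y) ∈ L there exists x' in the duality set J(x) = { x' ∈ X' : ‖x'‖² = ‖x‖² = ⟨x', x⟩ } with Re⟨x', y⟩ ≤ ω ‖x‖². Conversely, if for every (x,y) ∈ L there exists such x' ∈ J(x), then ‖y - λx‖ ≥ (λ - ω)‖x‖ for all λ > ω. -/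
open Filter Metric NormedSpace

set_option maxHeartbeats 1000000 in
/-- Characterization of the `ω`-dissipativity condition for a closed linear relation via
duality sets (Proposition on dissipativity, part (a)). -/
theorem omega_dissipative_iff_duality
    {X : Type*} [NormedAddCommGroup X] [NormedSpace ℂ X] [CompleteSpace X]
    (L : Submodule ℂ (X × X)) (hL : IsClosed (L : Set (X × X))) (ω : ℝ) :
    (∀ p ∈ L, ∀ t : ℝ, ω < t → (t - ω) * ‖p.1‖ ≤ ‖p.2 - (t : ℂ) • p.1‖) ↔
    (∀ p ∈ L, ∃ x' : X →L[ℂ] ℂ,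
      ‖x'‖ ^ 2 = ‖p.1‖ ^ 2 ∧ x' p.1 = ((‖p.1‖ ^ 2 : ℝ) : ℂ) ∧
      (x' p.2).re ≤ ω * ‖p.1‖ ^ 2) := by
  constructor
  · intro h p hp
    set x := p.1 with hx'
    set y := p.2 with hy'
    by_cases hx : x = 0
    · refine ⟨0, by simp [hx], by simp [hx], by simp [hx]⟩
    have hxpos : (0:ℝ) < ‖x‖ := norm_pos_iff.mpr hx
    set z : ℝ → X := fun t => (t:ℂ) • x - y with hzdef
    have hznorm : ∀ t : ℝ, ω < t → (t - ω) * ‖x‖ ≤ ‖z t‖ := by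
      intro t ht
      have := h p hp t ht
      rwa [← norm_sub_rev] at this
    have hz0 : ∀ t : ℝ, ω < t → z t ≠ 0 := by
      intro t ht
      have h1 : (0:ℝ) < (t - ω) * ‖x‖ := mul_pos (by linarith) hxpos
      intro hzz
      have h2 := hznorm t ht
      rw [hzz, norm_zero] at h2
      nlinarith
    have hf : ∀ t : ℝ, ω < t → ∃ g : X →L[ℂ] ℂ, ‖g‖ = 1 ∧ g (z t) = ‖z t‖ :=
      fun t ht => exists_dual_vector ℂ (z t) (norm_ne_zero_iff.mpr (hz0 t ht))
    choose! f hf1 hf2 using hf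
    -- the key real identity
    have hre : ∀ t : ℝ, ω < t → ‖z t‖ = t * (f t x).re - (f t y).re := by
      intro t ht
      have h1 : f t (z t) = (t:ℂ) * f t x - f t y := by
        simp [hzdef, map_sub, map_smul, smul_eq_mul]
      have h2 := hf2 t ht
      rw [h1] at h2
      have := congrArg Complex.re h2.symm
      simpa [Complex.mul_re] using this
    have hrex_le : ∀ t : ℝ, ω < t → (f t x).re ≤ ‖x‖ := by
      intro t ht
      calc (f t x).re ≤ ‖f t x‖ := Complex.re_le_norm _
        _ ≤ ‖f t‖ * ‖x‖ := (f t).le_opNorm x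
        _ = ‖x‖ := by rw [hf1 t ht, one_mul]
    have hA : ∀ t : ℝ, max ω 0 < t → (f t y).re ≤ ω * ‖x‖ := by
      intro t ht
      have ht' : ω < t := lt_of_le_of_lt (le_max_left _ _) ht
      have ht0 : (0:ℝ) < t := lt_of_le_of_lt (le_max_right _ _) ht
      have h1 := hznorm t ht'
      have h2 := hre t ht'
      have h3 := hrex_le t ht'
      nlinarith
    have hB : ∀ t : ℝ, max ω 0 < t → t * ‖x‖ - 2 * ‖y‖ ≤ t * (f t x).re := by
      intro t ht
      have ht' : ω < t := lt_of_le_of_lt (le_max_left _ _) ht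
      have ht0 : (0:ℝ) < t := lt_of_le_of_lt (le_max_right _ _) ht
      have h1 : t * ‖x‖ - ‖y‖ ≤ ‖z t‖ := by
        have := norm_sub_norm_le ((t:ℂ) • x) y
        rw [norm_smul] at this
        simp only [Complex.norm_real, Real.norm_eq_abs, abs_of_pos ht0] at this
        · exact le_trans (le_of_eq rfl) this
      have h2 := hre t ht'
      have h3 : -‖y‖ ≤ (f t y).re := by
        have := Complex.abs_re_le_norm (f t y)
        have h4 : ‖f t y‖ ≤ ‖y‖ := by
          calc ‖f t y‖ ≤ ‖f t‖ * ‖y‖ := (f t).le_opNorm y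
            _ ≤ 1 * ‖y‖ := by rw [hf1 t ht']
            _ = ‖y‖ := one_mul _
        have := abs_le.mp (le_trans (Complex.abs_re_le_norm (f t y)) h4)
        linarith [this.1]
      linarith
    -- pass to a weak-* cluster point
    set Φ : ℝ → WeakDual ℂ X := fun t => StrongDual.toWeakDual (f t) with hΦ
    have hball : IsCompact (WeakDual.toStrongDual ⁻¹' closedBall (0 : StrongDual ℂ X) 1) :=
      WeakDual.isCompact_closedBall (𝕜 := ℂ) 0 1
    have hle : Filter.map Φ atTop ≤ Filter.principal (WeakDual.toStrongDual ⁻¹' closedBall (0 : StrongDual ℂ X) 1) := by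
      rw [Filter.le_principal_iff, Filter.mem_map]
      filter_upwards [Filter.eventually_gt_atTop ω] with t ht
      simp only [Set.mem_preimage, mem_closedBall, dist_zero_right]
      rw [show ‖WeakDual.toStrongDual (Φ t)‖ = ‖f t‖ from rfl, hf1 t ht]
    obtain ⟨g, hgB, hg⟩ := hball.exists_clusterPt hle
    have mem_closed : ∀ S : Set (WeakDual ℂ X), IsClosed S →
        (∀ᶠ t in atTop, Φ t ∈ S) → g ∈ S := by
      intro S hS hev
      have h1 : Filter.map Φ atTop ≤ Filter.principal S := Filter.le_principal_iff.mpr hev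
      have h2 : ClusterPt g (Filter.principal S) := hg.mono h1
      rw [← hS.closure_eq]
      exact mem_closure_iff_clusterPt.mpr h2
    have hcont : ∀ v : X, Continuous fun g : WeakDual ℂ X => (g v).re :=
      fun v => Complex.continuous_re.comp (WeakDual.eval_continuous v)
    have hgy : (g y).re ≤ ω * ‖x‖ := by
      refine mem_closed {h | (h y).re ≤ ω * ‖x‖}
        (isClosed_le (hcont y) continuous_const) ?_
      filter_upwards [Filter.eventually_gt_atTop (max ω 0)] with t ht
      exact hA t ht
    have hgx : ‖x‖ ≤ (g x).re := by
      refine le_of_forall_pos_le_add ?_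
      intro ε hε
      have : ‖x‖ - ε ≤ (g x).re := by
        refine mem_closed {h | ‖x‖ - ε ≤ (h x).re}
          (isClosed_le continuous_const (hcont x)) ?_
        filter_upwards [Filter.eventually_gt_atTop (max (max ω 0) (2 * ‖y‖ / ε))] with t ht
        have ht1 : max ω 0 < t := lt_of_le_of_lt (le_max_left _ _) ht
        have ht0 : (0:ℝ) < t := lt_of_le_of_lt (le_max_right _ _) ht1
        have ht2 : 2 * ‖y‖ / ε ≤ t := le_of_lt (lt_of_le_of_lt (le_max_right _ _) ht)
        have h1 := hB t ht1
        have h2 : 2 * ‖y‖ ≤ ε * t := by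
          rw [div_le_iff₀ hε] at ht2; linarith
        show ‖x‖ - ε ≤ (Φ t x).re
        have h5 : t * (‖x‖ - ε) ≤ t * (f t x).re := by nlinarith
        exact le_of_mul_le_mul_left h5 ht0
      linarith
    have hgnorm : ‖WeakDual.toStrongDual g‖ ≤ 1 := by
      simpa [mem_closedBall, dist_zero_right] using hgB
    have hgx2 : ‖g x‖ ≤ ‖x‖ := by
      calc ‖g x‖ = ‖WeakDual.toStrongDual g x‖ := rfl
        _ ≤ ‖WeakDual.toStrongDual g‖ * ‖x‖ := (WeakDual.toStrongDual g).le_opNorm x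
        _ ≤ 1 * ‖x‖ := mul_le_mul_of_nonneg_right hgnorm (norm_nonneg x)
        _ = ‖x‖ := one_mul _
    have hre_eq : (g x).re = ‖x‖ :=
      le_antisymm (le_trans (Complex.re_le_norm _) hgx2) hgx
    have him : (g x).im = 0 := by
      have h1 : ‖g x‖ ^ 2 = (g x).re ^ 2 + (g x).im ^ 2 := by
        rw [Complex.sq_norm, Complex.normSq_apply]; ring
      have h2 : ‖g x‖ ^ 2 ≤ ‖x‖ ^ 2 := by nlinarith [norm_nonneg (g x)]
      nlinarith
    have hgxval : g x = (‖x‖ : ℂ) := by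
      apply Complex.ext
      · rw [Complex.ofReal_re]; exact hre_eq
      · rw [Complex.ofReal_im]; exact him
    refine ⟨(‖x‖ : ℂ) • WeakDual.toStrongDual g, ?_, ?_, ?_⟩
    · have hle1 : ‖(‖x‖ : ℂ) • WeakDual.toStrongDual g‖ ≤ ‖x‖ := by
        rw [norm_smul, Complex.norm_real, Real.norm_eq_abs, abs_of_pos hxpos]
        nlinarith
      have happ : ((‖x‖ : ℂ) • WeakDual.toStrongDual g) x = ((‖x‖^2 : ℝ) : ℂ) := by
        simp [ContinuousLinearMap.smul_apply, hgxval]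
        push_cast; ring
      have hge1 : ‖x‖ ≤ ‖(‖x‖ : ℂ) • WeakDual.toStrongDual g‖ := by
        have h1 : ‖((‖x‖ : ℂ) • WeakDual.toStrongDual g) x‖ ≤
            ‖(‖x‖ : ℂ) • WeakDual.toStrongDual g‖ * ‖x‖ :=
          ContinuousLinearMap.le_opNorm _ x
        rw [happ] at h1
        rw [Complex.norm_real, Real.norm_eq_abs, abs_of_nonneg (by positivity)] at h1
        nlinarith
      have := le_antisymm hle1 hge1
      rw [this]
    · simp [ContinuousLinearMap.smul_apply, hgxval]
      push_cast; ring
    · have : (((‖x‖ : ℂ) • WeakDual.toStrongDual g) y).re = ‖x‖ * (g y).re := by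
        simp [ContinuousLinearMap.smul_apply, Complex.mul_re]
      rw [this]
      nlinarith
  · intro h p hp t ht
    obtain ⟨x', hn, hxx, hxy⟩ := h p hp
    set x := p.1
    set y := p.2
    by_cases hx : ‖x‖ = 0
    · rw [hx, mul_zero]; exact norm_nonneg _
    have hxpos : (0:ℝ) < ‖x‖ := lt_of_le_of_ne (norm_nonneg _) (Ne.symm hx)
    have hnn : ‖x'‖ = ‖x‖ := by nlinarith [norm_nonneg x', norm_nonneg x]
    have key : (t - ω) * ‖x‖ ^ 2 ≤ (x' ((t:ℂ) • x - y)).re := by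
      have h1 : x' ((t:ℂ) • x - y) = (t:ℂ) * ((‖x‖^2:ℝ):ℂ) - x' y := by
        rw [map_sub, map_smul, smul_eq_mul, hxx]
      rw [h1, Complex.sub_re, Complex.mul_re]
      simp only [Complex.ofReal_re, Complex.ofReal_im]
      nlinarith
    have h2 : (x' ((t:ℂ) • x - y)).re ≤ ‖x‖ * ‖y - (t:ℂ) • x‖ := by
      calc (x' ((t:ℂ) • x - y)).re ≤ ‖x' ((t:ℂ) • x - y)‖ := Complex.re_le_norm _
        _ ≤ ‖x'‖ * ‖(t:ℂ) • x - y‖ := x'.le_opNorm _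
        _ = ‖x‖ * ‖y - (t:ℂ) • x‖ := by rw [hnn, norm_sub_rev]
    have h3 : (t - ω) * ‖x‖ ^ 2 ≤ ‖x‖ * ‖y - (t:ℂ) • x‖ := le_trans key h2
    nlinarith
end

section
/- Let L be a closed linear relation in a Banach space X satisfying the ω-dissipativity condition ‖y - λx‖ ≥ (λ - ω)‖x‖ for all (x,y) ∈ L and λ > ω, and suppose L - λ₀ is surjective for some λ₀ > ω. Then (ω, ∞) ⊆ ρ(L), i.e., L - λ is bijective with bounded inverse for every λ > ω. -/
/-! Dissipativity at `t > ω` makes `(x, y) ↦ y - t • x` injective on `L`, with a left inverse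
of norm at most `(t - ω)⁻¹`; where it is also onto, this is a bounded resolvent `R`.
Surjectivity survives perturbation: for `‖s - t‖ < t - ω`, solving `y - s • x = z` on `L`
reduces to the fixed-point equation `x = R (z + (s - t) • x)`, solvable by a Neumann series
since `‖(s - t) • R‖ < 1`. A point `t` thus reaches all of `(ω, 2t - ω)`, and steps of ratio
`3 / 2` away from `ω` starting at `λ₀` cover the whole half-line. -/

namespace LinearRelation

variable {𝕜 X : Type*} [NontriviallyNormedField 𝕜] [NormedAddCommGroup X] [NormedSpace 𝕜 X]
  {L : Submodule 𝕜 (X × X)} {t : 𝕜} {c : ℝ}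

theorem eq_zero_of_snd_sub_smul_fst_eq_zero (hc : 0 < c)
    (hb : ∀ p ∈ L, c * ‖p.1‖ ≤ ‖p.2 - t • p.1‖) {p : X × X} (hp : p ∈ L)
    (h : p.2 - t • p.1 = 0) : p = 0 := by
  have hp₁ : p.1 = 0 := by
    have := hb p hp
    rw [h, norm_zero] at this
    exact norm_le_zero_iff.mp (nonpos_of_mul_nonpos_right this hc)
  rw [sub_eq_zero, hp₁, smul_zero] at h
  exact Prod.ext hp₁ h

theorem exists_resolvent (hc : 0 < c) (hb : ∀ p ∈ L, c * ‖p.1‖ ≤ ‖p.2 - t • p.1‖)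
    (hsurj : ∀ z : X, ∃ p ∈ L, p.2 - t • p.1 = z) :
    ∃ R : X →L[𝕜] X, ‖R‖ ≤ c⁻¹ ∧ ∀ p ∈ L, R (p.2 - t • p.1) = p.1 := by
  let A : L →ₗ[𝕜] X := (LinearMap.snd 𝕜 X X - t • LinearMap.fst 𝕜 X X) ∘ₗ L.subtype
  have hA : Function.Bijective A := by
    refine ⟨(injective_iff_map_eq_zero A).mpr fun p hp => ?_, fun z => ?_⟩
    · exact Subtype.ext (eq_zero_of_snd_sub_smul_fst_eq_zero hc hb p.2 hp)
    · obtain ⟨p, hp, rfl⟩ := hsurj z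
      exact ⟨⟨p, hp⟩, rfl⟩
  let e := LinearEquiv.ofBijective A hA
  let R : X →ₗ[𝕜] X := (LinearMap.fst 𝕜 X X ∘ₗ L.subtype) ∘ₗ e.symm.toLinearMap
  have hR : ∀ z, ‖R z‖ ≤ c⁻¹ * ‖z‖ := fun z => by
    rw [inv_mul_eq_div, le_div_iff₀ hc, mul_comm]
    have hz : ((e.symm z : L) : X × X).2 - t • ((e.symm z : L) : X × X).1 = z :=
      e.apply_symm_apply z
    calc c * ‖R z‖ = c * ‖((e.symm z : L) : X × X).1‖ := rfl
      _ ≤ ‖z‖ := (hb _ (e.symm z).2).trans_eq (congrArg norm hz)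
  exact ⟨R.mkContinuous c⁻¹ hR, R.mkContinuous_norm_le (inv_nonneg.mpr hc.le) hR,
    fun p hp => congrArg (fun q : L => (q : X × X).1) (e.symm_apply_apply ⟨p, hp⟩)⟩

theorem surjective_of_norm_sub_lt [CompleteSpace X] (hc : 0 < c)
    (hb : ∀ p ∈ L, c * ‖p.1‖ ≤ ‖p.2 - t • p.1‖)
    (hsurj : ∀ z : X, ∃ p ∈ L, p.2 - t • p.1 = z) {s : 𝕜} (hs : ‖s - t‖ < c) :
    ∀ z : X, ∃ p ∈ L, p.2 - s • p.1 = z := by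
  obtain ⟨R, hR, hRL⟩ := exists_resolvent hc hb hsurj
  have hsmall : ‖(s - t) • R‖ < 1 :=
    calc ‖(s - t) • R‖ ≤ ‖s - t‖ * c⁻¹ := (norm_smul_le _ _).trans (by gcongr)
      _ < 1 := by rwa [← div_eq_mul_inv, div_lt_one hc]
  obtain ⟨u, hu⟩ := isUnit_one_sub_of_norm_lt_one hsmall
  intro z
  set x := (↑u⁻¹ : X →L[𝕜] X) (R z)
  have hx : R z + (s - t) • R x = x := by
    have : (1 - (s - t) • R) x = R z := hu ▸ DFunLike.congr_fun u.mul_inv (R z)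
    rw [← this]
    simp
  obtain ⟨p, hp, hpz⟩ := hsurj (z + (s - t) • x)
  have hp₁ : p.1 = x := by rw [← hRL p hp, hpz, map_add, map_smul, hx]
  refine ⟨p, hp, ?_⟩
  calc p.2 - s • p.1 = (p.2 - t • p.1) - (s - t) • p.1 := by rw [sub_smul]; abel
    _ = z := by rw [hpz, hp₁, add_sub_cancel_right]

end LinearRelation

theorem forall_gt_of_doubling_step {P : ℝ → Prop} {ω l₀ : ℝ} (hl₀ : ω < l₀) (h₀ : P l₀)
    (hstep : ∀ t, ω < t → P t → ∀ s, ω < s → s - ω < 2 * (t - ω) → P s) :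
    ∀ t, ω < t → P t := by
  have hpos (n : ℕ) : 0 < (3 / 2 : ℝ) ^ n * (l₀ - ω) := by
    have := sub_pos.mpr hl₀
    positivity
  have hpow (n : ℕ) : P (ω + (3 / 2) ^ n * (l₀ - ω)) := by
    induction n with
    | zero => simpa using h₀
    | succ n ih =>
      refine hstep _ (by linarith [hpos n]) ih _ (by linarith [hpos (n + 1)]) ?_
      rw [pow_succ]
      linarith [hpos n]
  intro t ht
  obtain ⟨n, hn⟩ := pow_unbounded_of_one_lt ((t - ω) / (l₀ - ω)) (by norm_num : (1 : ℝ) < 3 / 2)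
  rw [div_lt_iff₀ (sub_pos.mpr hl₀)] at hn
  exact hstep _ (by linarith [hpos n]) (hpow n) t ht (by linarith)

theorem omega_dissipative_resolvent_halfline_general
    {X : Type*} [NormedAddCommGroup X] [NormedSpace ℂ X] [CompleteSpace X]
    (L : Submodule ℂ (X × X)) (ω : ℝ)
    (hdiss : ∀ p ∈ L, ∀ t : ℝ, ω < t → (t - ω) * ‖p.1‖ ≤ ‖p.2 - (t : ℂ) • p.1‖)
    (hsurj : ∃ l₀ : ℝ, ω < l₀ ∧ ∀ z : X, ∃ p ∈ L, p.2 - (l₀ : ℂ) • p.1 = z) :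
    ∀ t : ℝ, ω < t →
      (∀ p ∈ L, p.2 - (t : ℂ) • p.1 = 0 → p.1 = 0) ∧
      (∀ z : X, ∃ p ∈ L, p.2 - (t : ℂ) • p.1 = z) ∧
      (∃ Rt : X →L[ℂ] X, ∀ p ∈ L, Rt (p.2 - (t : ℂ) • p.1) = p.1) := by
  obtain ⟨l₀, hl₀, hsurj₀⟩ := hsurj
  have hsurj_all : ∀ t : ℝ, ω < t → ∀ z : X, ∃ p ∈ L, p.2 - (t : ℂ) • p.1 = z := by
    refine forall_gt_of_doubling_step hl₀ hsurj₀ fun t ht hsurj_t s hs hst => ?_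
    refine LinearRelation.surjective_of_norm_sub_lt (sub_pos.mpr ht)
      (fun p hp => hdiss p hp t ht) hsurj_t ?_
    rw [← Complex.ofReal_sub, Complex.norm_real, Real.norm_eq_abs, abs_lt]
    constructor <;> linarith
  intro t ht
  have hc : 0 < t - ω := sub_pos.mpr ht
  have hb := fun p hp => hdiss p hp t ht
  refine ⟨fun p hp h => congrArg Prod.fst
      (LinearRelation.eq_zero_of_snd_sub_smul_fst_eq_zero hc hb hp h),
    hsurj_all t ht, ?_⟩
  obtain ⟨R, -, hR⟩ := LinearRelation.exists_resolvent hc hb (hsurj_all t ht)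
  exact ⟨R, hR⟩

/-- An `ω`-dissipative closed linear relation with `L - λ₀` surjective for some `λ₀ > ω`
has `(ω, ∞)` in its resolvent set: `L - λ` is bijective with a bounded inverse for all
`λ > ω`. -/
theorem omega_dissipative_resolvent_halfline
    {X : Type*} [NormedAddCommGroup X] [NormedSpace ℂ X] [CompleteSpace X]
    (L : Submodule ℂ (X × X)) (hL : IsClosed (L : Set (X × X))) (ω : ℝ)
    (hdiss : ∀ p ∈ L, ∀ t : ℝ, ω < t → (t - ω) * ‖p.1‖ ≤ ‖p.2 - (t : ℂ) • p.1‖)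
    (hsurj : ∃ l₀ : ℝ, ω < l₀ ∧ ∀ z : X, ∃ p ∈ L, p.2 - (l₀ : ℂ) • p.1 = z) :
    ∀ t : ℝ, ω < t →
      (∀ p ∈ L, p.2 - (t : ℂ) • p.1 = 0 → p.1 = 0) ∧
      (∀ z : X, ∃ p ∈ L, p.2 - (t : ℂ) • p.1 = z) ∧
      (∃ Rt : X →L[ℂ] X, ∀ p ∈ L, Rt (p.2 - (t : ℂ) • p.1) = p.1) :=
  omega_dissipative_resolvent_halfline_general L ω hdiss hsurj
end

section
/- Let X be a Hilbert space, E ∈ L(X) self-adjoint, nonnegative, with closed range, and A : dom A ⊆ X → X linear such that Re(Ax - ωEx, x) ≤ 0 for all x ∈ dom A (i.e., A - ωE is dissipative). If λ > ω and (λE - A)x = 0 for x ∈ dom A, then Ex = 0 and Ax = 0; consequently, if ker E ∩ ker A = {0}, then λE - A is injective for all λ > ω. -/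
open scoped InnerProductSpace

private lemma pos_op_inner_self_zero
    {X : Type*} [NormedAddCommGroup X] [InnerProductSpace ℂ X] [CompleteSpace X]
    (E : X →L[ℂ] X) (hSA : IsSelfAdjoint E)
    (hpos : ∀ x : X, 0 ≤ (⟪E x, x⟫_ℂ).re)
    {x : X} (hx : (⟪E x, x⟫_ℂ).re = 0) : E x = 0 := by
  by_contra h
  have hb : (0:ℝ) < ‖E x‖ ^ 2 := by
    have : 0 < ‖E x‖ := norm_pos_iff.mpr h
    positivity
  set b : ℝ := ‖E x‖ ^ 2 with hbdef
  set c : ℝ := (⟪E (E x), E x⟫_ℂ).re with hcdef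
  have hc : 0 ≤ c := hpos _
  set t : ℝ := -b / (2 * c + 1) with htdef
  have hsymm := (ContinuousLinearMap.isSelfAdjoint_iff_isSymmetric.mp hSA)
  have h1 : ⟪E x, E x⟫_ℂ = (b : ℂ) := by
    rw [inner_self_eq_norm_sq_to_K]; norm_cast
  have h2 : ⟪E (E x), x⟫_ℂ = (b : ℂ) := (hsymm (E x) x).trans h1
  have key := hpos (x + (t : ℂ) • E x)
  rw [map_add, map_smul, inner_add_left, inner_add_right, inner_add_right,
    inner_smul_left, inner_smul_right, inner_smul_left, inner_smul_right,
    h1, h2] at key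
  simp only [Complex.add_re, Complex.mul_re, Complex.conj_ofReal, Complex.ofReal_re,
    Complex.ofReal_im, hx] at key
  have key' : 0 ≤ 2 * t * b + t ^ 2 * c := by nlinarith [key]
  have ht : t = -b / (2 * c + 1) := htdef
  have hden : (0:ℝ) < 2 * c + 1 := by linarith
  rw [ht] at key'
  have hden' : (2 * c + 1) ≠ 0 := ne_of_gt hden
  field_simp at key'
  have hD : (0:ℝ) < (2 * c + 1) * (2 * c + 1) ^ 2 := by positivity
  have hnum := key'
  nlinarith [hnum, hb, hc, mul_pos hb hb, mul_nonneg (mul_pos hb hb).le hc]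

/-- For `E` self-adjoint nonnegative and `A - ωE` dissipative: if `(λE - A)x = 0` with
`λ > ω`, then `Ex = 0` and `Ax = 0`; consequently, if `ker E ∩ ker A = {0}` then
`λE - A` is injective for all `λ > ω`. -/
theorem dissipative_pencil_injective
    {X : Type*} [NormedAddCommGroup X] [InnerProductSpace ℂ X] [CompleteSpace X]
    (E : X →L[ℂ] X) (hSA : IsSelfAdjoint E)
    (hpos : ∀ x : X, 0 ≤ (⟪E x, x⟫_ℂ).re)
    (hran : IsClosed ((LinearMap.range (E : X →ₗ[ℂ] X) : Submodule ℂ X) : Set X))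
    (D : Submodule ℂ X) (A : D →ₗ[ℂ] X) (ω : ℝ)
    (hdiss : ∀ x : D, (⟪A x - (ω : ℂ) • E (x : X), (x : X)⟫_ℂ).re ≤ 0) :
    (∀ t : ℝ, ω < t → ∀ x : D, (t : ℂ) • E (x : X) - A x = 0 →
      E (x : X) = 0 ∧ A x = 0) ∧
    ((∀ x : D, E (x : X) = 0 → A x = 0 → (x : X) = 0) →
      ∀ t : ℝ, ω < t → ∀ x : D, (t : ℂ) • E (x : X) - A x = 0 → (x : X) = 0) := by
  have main : ∀ t : ℝ, ω < t → ∀ x : D, (t : ℂ) • E (x : X) - A x = 0 →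
      E (x : X) = 0 ∧ A x = 0 := by
    intro t ht x hx
    have hAx : A x = (t : ℂ) • E (x : X) := (sub_eq_zero.mp hx).symm
    have hd := hdiss x
    rw [hAx, ← sub_smul] at hd
    have hre : ((⟪((t:ℂ) - ω) • E (x : X), (x : X)⟫_ℂ)).re
        = (t - ω) * (⟪E (x : X), (x : X)⟫_ℂ).re := by
      rw [inner_smul_left]
      simp [Complex.mul_re, Complex.conj_ofReal, Complex.sub_re]
    rw [hre] at hd
    have hEx0 : (⟪E (x : X), (x : X)⟫_ℂ).re = 0 := by
      have h1 := hpos (x : X)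
      nlinarith [h1, hd, sub_pos.mpr ht]
    have hE : E (x : X) = 0 := pos_op_inner_self_zero E hSA hpos hEx0
    exact ⟨hE, by rw [hAx, hE, smul_zero]⟩
  refine ⟨main, fun hker t ht x hx => ?_⟩
  obtain ⟨hE, hA⟩ := main t ht x hx
  exact hker x hE hA
end
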